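/- arXiv:2005.08401 — 11 statements merged into one kernel-verified Lean document; each statement's English description precedes it below -/
import Mathlib

section
/- If there exists an (h,k)_q-evasive F_q-subspace U of dimension t in V(r,q^n), then for each 0 ≤ s ≤ rn - t there exists an (h, k+s)_q-evasive F_q-subspace of dimension t+s in V(r,q^n). -/
open Module Submodule

/-- An `F_q`-subspace `U` of `V = V(r, q^n)` is `(h,k)_q`-evasive if its `F_{q^n}`-span has
`F_{q^n}`-dimension at least `h` and every `h`-dimensional `F_{q^n}`-subspace of `V` meets `U`
in an `F_q`-subspace of `F_q`-dimension at most `k`. -/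
def IsEvasive (Fq Fqn : Type*) {V : Type*} [Field Fq] [Field Fqn] [Algebra Fq Fqn]
    [AddCommGroup V] [Module Fq V] [Module Fqn V] [IsScalarTower Fq Fqn V]
    (h k : ℕ) (U : Submodule Fq V) : Prop :=
  h ≤ finrank Fqn (span Fqn (U : Set V)) ∧
  ∀ H : Submodule Fqn V, finrank Fqn H = h →
    finrank Fq ↥(U ⊓ H.restrictScalars Fq) ≤ k

/-- Auxiliary: any subspace can be enlarged by `s` dimensions, as long as there is room. -/
lemma exists_superspace {K M : Type*} [Field K] [AddCommGroup M] [Module K M]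
    [FiniteDimensional K M] (U : Submodule K M) (s : ℕ)
    (hle : finrank K U + s ≤ finrank K M) :
    ∃ U' : Submodule K M, U ≤ U' ∧ finrank K U' = finrank K U + s := by
  induction s with
  | zero => exact ⟨U, le_rfl, by simp⟩
  | succ s ih =>
    obtain ⟨U₁, hUU₁, hU₁⟩ := ih (by omega)
    have hlt : finrank K U₁ < finrank K M := by omega
    obtain ⟨m, hm⟩ := U₁.exists_of_finrank_lt hlt
    have hm0 : m ≠ 0 := by
      intro h0
      exact hm 1 one_ne_zero (by simp [h0])
    have hdisj : U₁ ⊓ (K ∙ m) = ⊥ := by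
      rw [eq_bot_iff]
      rintro x ⟨hx1, hx2⟩
      obtain ⟨c, rfl⟩ := mem_span_singleton.mp hx2
      rcases eq_or_ne c 0 with rfl | hc
      · simp
      · exact absurd hx1 (hm c hc)
    refine ⟨U₁ ⊔ (K ∙ m), le_trans hUU₁ le_sup_left, ?_⟩
    have := Submodule.finrank_sup_add_finrank_inf_eq U₁ (K ∙ m)
    rw [hdisj, finrank_span_singleton hm0] at this
    simp only [finrank_bot] at this
    omega

/-- from a `t`-dimensional `(h,k)_q`-evasive subspace one obtains
`(h, k+s)_q`-evasive subspaces of dimension `t+s` for each `0 ≤ s ≤ rn - t`. -/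
theorem stmt2 {Fq Fqn V : Type*} [Field Fq] [Field Fqn] [Algebra Fq Fqn]
    [AddCommGroup V] [Module Fq V] [Module Fqn V] [IsScalarTower Fq Fqn V]
    [FiniteDimensional Fq Fqn] [FiniteDimensional Fqn V]
    (n r h k t s : ℕ) (hn : finrank Fq Fqn = n) (hr : finrank Fqn V = r)
    (U : Submodule Fq V) (hU : IsEvasive Fq Fqn h k U) (ht : finrank Fq U = t)
    (hs : s ≤ r * n - t) :
    ∃ U' : Submodule Fq V, finrank Fq U' = t + s ∧ IsEvasive Fq Fqn h (k + s) U' := by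
  haveI : FiniteDimensional Fq V := Module.Finite.trans Fqn V
  have hVdim : finrank Fq V = n * r := by
    rw [← hn, ← hr]; exact (finrank_mul_finrank Fq Fqn V).symm
  have htle : t ≤ n * r := by
    rw [← hVdim, ← ht]; exact U.finrank_le
  have hcomm : r * n = n * r := Nat.mul_comm r n
  obtain ⟨U', hUU', hdim⟩ := exists_superspace U s (by rw [ht, hVdim]; omega)
  rw [ht] at hdim
  refine ⟨U', hdim, ?_, ?_⟩
  · calc h ≤ finrank Fqn (span Fqn (U : Set V)) := hU.1
      _ ≤ finrank Fqn (span Fqn (U' : Set V)) :=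
        Submodule.finrank_mono (span_mono hUU')
  · intro H hH
    set B := U' ⊓ H.restrictScalars Fq with hB
    have e1 := Submodule.finrank_sup_add_finrank_inf_eq U B
    have e2 : U ⊓ B = U ⊓ H.restrictScalars Fq := by
      rw [hB, ← inf_assoc, inf_eq_left.mpr hUU']
    have e3 : finrank Fq ↥(U ⊔ B) ≤ finrank Fq U' :=
      Submodule.finrank_mono (sup_le hUU' inf_le_left)
    have e4 : finrank Fq ↥(U ⊓ H.restrictScalars Fq) ≤ k := hU.2 H hH
    rw [e2] at e1
    omega
end

section
/- If there exists an (r-1,k)_q-evasive F_q-subspace of F_q-dimension d in V(r,q^n), then for every positive integer s with d-k ≤ s ≤ n there exists an (r, k+s)_q-evasive F_q-subspace of F_q-dimension d+s in V(r+1, q^n). -/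
open Module Submodule

section Ext

variable {K V : Type*} [Field K] [AddCommGroup V] [Module K V] [FiniteDimensional K V]

lemma aux_step {p : Submodule K V} {x : V} (hx : x ∉ p) :
    finrank K ↥(p ⊔ K ∙ x) = finrank K p + 1 := by
  have hx0 : x ≠ 0 := fun h => hx (h ▸ p.zero_mem)
  have hinf : p ⊓ (K ∙ x) = ⊥ := by
    rw [Submodule.eq_bot_iff]
    rintro y ⟨hy1, hy2⟩
    rcases Submodule.mem_span_singleton.mp hy2 with ⟨c, rfl⟩
    by_contra h
    have hc : c ≠ 0 := fun hc => h (by simp [hc])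
    exact hx (by simpa [smul_smul, inv_mul_cancel₀ hc] using p.smul_mem c⁻¹ hy1)
  have h := Submodule.finrank_sup_add_finrank_inf_eq p (K ∙ x)
  rw [hinf, finrank_bot, finrank_span_singleton hx0] at h
  omega

lemma aux_ext (p : Submodule K V) (m : ℕ) (h1 : finrank K p ≤ m) (h2 : m ≤ finrank K V) :
    ∃ q : Submodule K V, p ≤ q ∧ finrank K q = m := by
  induction m with
  | zero => exact ⟨p, le_rfl, by omega⟩
  | succ m ih =>
    by_cases h : finrank K p ≤ m
    · obtain ⟨q, hpq, hq⟩ := ih h (by omega)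
      have hqt : q < ⊤ := Submodule.lt_top_of_finrank_lt_finrank (by omega)
      obtain ⟨x, -, hx⟩ := SetLike.exists_of_lt hqt
      exact ⟨q ⊔ K ∙ x, le_trans hpq le_sup_left, by rw [aux_step hx, hq]⟩
    · exact ⟨p, le_rfl, by omega⟩

end Ext

section Core

variable {Fq Fqn V : Type*} [Field Fq] [Field Fqn] [Algebra Fq Fqn]
    [AddCommGroup V] [Module Fq V] [Module Fqn V] [IsScalarTower Fq Fqn V]
    [FiniteDimensional Fq Fqn] [FiniteDimensional Fqn V]

lemma aux_core (r k d s : ℕ) (hrV : finrank Fqn V = r)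
    (U : Submodule Fq V) (hU : IsEvasive Fq Fqn (r - 1) k U) (hd : finrank Fq U = d)
    (hdk : d ≤ k + s) (W : Submodule Fq Fqn) (hW : finrank Fq W = s)
    (K : Submodule Fqn (V × Fqn)) (hK : finrank Fqn K = r) :
    finrank Fq ↥((U.prod W) ⊓ K.restrictScalars Fq) ≤ k + s := by
  have : FiniteDimensional Fq V := FiniteDimensional.trans Fq Fqn V
  set M := (U.prod W) ⊓ K.restrictScalars Fq with hM
  set φ : ↥M →ₗ[Fq] Fqn := (LinearMap.snd Fq V Fqn).comp M.subtype with hφ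
  have hrange : LinearMap.range φ ≤ W := by
    rintro _ ⟨x, rfl⟩
    exact x.2.1.2
  have hrank := LinearMap.finrank_range_add_finrank_ker φ
  set H₀ : Submodule Fqn V := K.comap (LinearMap.inl Fqn V Fqn) with hH₀
  -- the kernel injects into U ⊓ H₀
  have hker : finrank Fq ↥(LinearMap.ker φ) ≤ finrank Fq ↥(U ⊓ H₀.restrictScalars Fq) := by
    have hmem : ∀ x : ↥(LinearMap.ker φ), ((x : ↥M) : V × Fqn).1 ∈ U ⊓ H₀.restrictScalars Fq := by
      rintro ⟨⟨⟨v, w⟩, hvw⟩, hx⟩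
      have hw : w = 0 := hx
      refine ⟨hvw.1.1, ?_⟩
      have : ((v, w) : V × Fqn) ∈ K := hvw.2
      subst hw
      exact this
    set ψ : ↥(LinearMap.ker φ) →ₗ[Fq] ↥(U ⊓ H₀.restrictScalars Fq) :=
      LinearMap.codRestrict _ ((LinearMap.fst Fq V Fqn).comp
        (M.subtype.comp (LinearMap.ker φ).subtype)) hmem with hψ
    have hinj : Function.Injective ψ := by
      rintro ⟨⟨⟨v, w⟩, hvw⟩, hx⟩ ⟨⟨⟨v', w'⟩, hvw'⟩, hx'⟩ h
      have hv : v = v' := congrArg Subtype.val h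
      have hw : w = 0 := hx
      have hw' : w' = 0 := hx'
      subst hv hw hw'
      rfl
    exact LinearMap.finrank_le_finrank_of_injective hinj
  by_cases hc : finrank Fqn H₀ = r
  · -- H₀ = ⊤, K = range inl, φ = 0
    have hH₀top : H₀ = ⊤ := Submodule.eq_top_of_finrank_eq (by rw [hc, hrV])
    have hle : LinearMap.range (LinearMap.inl Fqn V Fqn) ≤ K := by
      rintro _ ⟨v, rfl⟩
      have : v ∈ H₀ := hH₀top ▸ Submodule.mem_top
      exact this
    have hfr : finrank Fqn ↥(LinearMap.range (LinearMap.inl Fqn V Fqn)) = r := by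
      rw [← hrV]
      exact (LinearEquiv.finrank_eq (LinearEquiv.ofInjective _ LinearMap.inl_injective)).symm
    have hKeq : K = LinearMap.range (LinearMap.inl Fqn V Fqn) :=
      (Submodule.eq_of_le_of_finrank_le hle (by rw [hfr, hK])).symm
    have hrzero : LinearMap.range φ = ⊥ := by
      rw [eq_bot_iff]
      rintro _ ⟨x, rfl⟩
      have hxK : (x : V × Fqn) ∈ K := x.2.2
      rw [hKeq] at hxK
      obtain ⟨v, hv⟩ := hxK
      have : (x : V × Fqn).2 = 0 := by rw [← hv]; rfl
      simpa [φ] using this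
    have hUd : finrank Fq ↥(U ⊓ H₀.restrictScalars Fq) = d := by
      rw [hH₀top]
      rw [show Submodule.restrictScalars Fq (⊤ : Submodule Fqn V) = ⊤ from rfl, inf_top_eq, hd]
    rw [hrzero] at hrank
    simp [finrank_bot] at hrank
    omega
  · -- extend H₀ to dimension r - 1
    have hle : finrank Fqn H₀ ≤ r := hrV ▸ H₀.finrank_le
    obtain ⟨H₁, hH₁le, hH₁⟩ := aux_ext H₀ (r - 1) (by omega) (by omega)
    have hUk : finrank Fq ↥(U ⊓ H₀.restrictScalars Fq) ≤ k := by
      refine le_trans (Submodule.finrank_mono ?_) (hU.2 H₁ hH₁)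
      exact inf_le_inf_left U (fun x hx => hH₁le hx)
    have hs : finrank Fq ↥(LinearMap.range φ) ≤ s := hW ▸ Submodule.finrank_mono hrange
    omega

end Core

set_option maxHeartbeats 1000000 in
/-- from an `(r-1,k)_q`-evasive subspace of dimension `d` in `V(r,q^n)` one
obtains an `(r, k+s)_q`-evasive subspace of dimension `d+s` in `V(r+1,q^n)`, for every
positive integer `s` with `d - k ≤ s ≤ n`. -/
theorem stmt3 {Fq Fqn V V' : Type*} [Field Fq] [Field Fqn] [Algebra Fq Fqn]
    [AddCommGroup V] [Module Fq V] [Module Fqn V] [IsScalarTower Fq Fqn V]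
    [AddCommGroup V'] [Module Fq V'] [Module Fqn V'] [IsScalarTower Fq Fqn V']
    [FiniteDimensional Fq Fqn] [FiniteDimensional Fqn V] [FiniteDimensional Fqn V']
    (n r k d s : ℕ) (hn : finrank Fq Fqn = n)
    (hrV : finrank Fqn V = r) (hrV' : finrank Fqn V' = r + 1)
    (U : Submodule Fq V) (hU : IsEvasive Fq Fqn (r - 1) k U) (hd : finrank Fq U = d)
    (hs0 : 0 < s) (hs1 : d - k ≤ s) (hs2 : s ≤ n) :
    ∃ U' : Submodule Fq V', finrank Fq U' = d + s ∧ IsEvasive Fq Fqn r (k + s) U' := by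
  have hFqV : FiniteDimensional Fq V := FiniteDimensional.trans Fq Fqn V
  have hFqV' : FiniteDimensional Fq V' := FiniteDimensional.trans Fq Fqn V'
  have hdk : d ≤ k + s := by
    have hk : finrank Fq U ≤ k + s ∨ True := Or.inr trivial
    omega
  -- the linear equivalence V × Fqn ≃ V'
  have hfr : finrank Fqn (V × Fqn) = finrank Fqn V' := by
    rw [Module.finrank_prod, hrV, finrank_self, hrV']
  let e : (V × Fqn) ≃ₗ[Fqn] V' := LinearEquiv.ofFinrankEq _ _ hfr
  let eF : (V × Fqn) ≃ₗ[Fq] V' := e.restrictScalars Fq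
  -- a subspace W of Fqn of Fq-dimension s
  obtain ⟨W, -, hW⟩ := aux_ext (⊥ : Submodule Fq Fqn) s (by simp) (by rw [hn]; exact hs2)
  let U₀ : Submodule Fq (V × Fqn) := U.prod W
  -- Fq-dimension of U₀
  have hU₀ : finrank Fq U₀ = d + s := by
    have hsup : U₀ = (U.map (LinearMap.inl Fq V Fqn)) ⊔ (W.map (LinearMap.inr Fq V Fqn)) :=
      LinearMap.prod_eq_sup_map U W
    have hinf : (U.map (LinearMap.inl Fq V Fqn)) ⊓ (W.map (LinearMap.inr Fq V Fqn)) = ⊥ := by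
      rw [eq_bot_iff]
      rintro x ⟨⟨u, hu, rfl⟩, ⟨w, hw, hw2⟩⟩
      have h1 : u = 0 := by
        have := congrArg Prod.fst hw2
        simpa using this.symm
      simp [h1]
    have h1 : finrank Fq ↥(U.map (LinearMap.inl Fq V Fqn)) = d := by
      rw [← hd]
      exact (LinearEquiv.finrank_eq
        (Submodule.equivMapOfInjective _ LinearMap.inl_injective U)).symm
    have h2 : finrank Fq ↥(W.map (LinearMap.inr Fq V Fqn)) = s := by
      rw [← hW]
      exact (LinearEquiv.finrank_eq
        (Submodule.equivMapOfInjective _ LinearMap.inr_injective W)).symm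
    have h3 := Submodule.finrank_sup_add_finrank_inf_eq
      (U.map (LinearMap.inl Fq V Fqn)) (W.map (LinearMap.inr Fq V Fqn))
    rw [hinf, finrank_bot, h1, h2] at h3
    rw [hsup]
    omega
  refine ⟨U₀.map (eF : (V × Fqn) →ₗ[Fq] V'), ?_, ?_, ?_⟩
  · rw [LinearEquiv.finrank_map_eq eF U₀, hU₀]
  · -- span condition
    have hset : (U₀.map (eF : (V × Fqn) →ₗ[Fq] V') : Set V') = ⇑(e : (V × Fqn) →ₗ[Fqn] V') '' (U₀ : Set (V × Fqn)) := by
      rw [Submodule.map_coe]; rfl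
    rw [hset, ← Submodule.map_span (e : (V × Fqn) →ₗ[Fqn] V') (U₀ : Set (V × Fqn)),
      LinearEquiv.finrank_map_eq e]
    -- now bound the span of U₀ in V × Fqn
    have hA : (span Fqn (U : Set V)).map (LinearMap.inl Fqn V Fqn)
        ≤ span Fqn (U₀ : Set (V × Fqn)) := by
      rw [Submodule.map_span]
      apply span_mono
      rintro _ ⟨u, hu, rfl⟩
      exact ⟨hu, W.zero_mem⟩
    have hB : (span Fqn (W : Set Fqn)).map (LinearMap.inr Fqn V Fqn)
        ≤ span Fqn (U₀ : Set (V × Fqn)) := by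
      rw [Submodule.map_span]
      apply span_mono
      rintro _ ⟨w, hw, rfl⟩
      exact ⟨U.zero_mem, hw⟩
    have hinf : ((span Fqn (U : Set V)).map (LinearMap.inl Fqn V Fqn)) ⊓
        ((span Fqn (W : Set Fqn)).map (LinearMap.inr Fqn V Fqn)) = ⊥ := by
      rw [eq_bot_iff]
      rintro x ⟨⟨u, hu, rfl⟩, ⟨w, hw, hw2⟩⟩
      have h1 : u = 0 := by
        have := congrArg Prod.fst hw2
        simpa using this.symm
      simp [h1]
    have h1 : finrank Fqn ↥((span Fqn (U : Set V)).map (LinearMap.inl Fqn V Fqn))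
        = finrank Fqn (span Fqn (U : Set V)) :=
      (LinearEquiv.finrank_eq (Submodule.equivMapOfInjective _ LinearMap.inl_injective _)).symm
    have h2 : finrank Fqn ↥((span Fqn (W : Set Fqn)).map (LinearMap.inr Fqn V Fqn))
        = finrank Fqn (span Fqn (W : Set Fqn)) :=
      (LinearEquiv.finrank_eq (Submodule.equivMapOfInjective _ LinearMap.inr_injective _)).symm
    have h3 := Submodule.finrank_sup_add_finrank_inf_eq
      ((span Fqn (U : Set V)).map (LinearMap.inl Fqn V Fqn))
      ((span Fqn (W : Set Fqn)).map (LinearMap.inr Fqn V Fqn))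
    rw [hinf, finrank_bot, h1, h2] at h3
    have hmono : finrank Fqn ↥(((span Fqn (U : Set V)).map (LinearMap.inl Fqn V Fqn)) ⊔
        ((span Fqn (W : Set Fqn)).map (LinearMap.inr Fqn V Fqn)))
        ≤ finrank Fqn (span Fqn (U₀ : Set (V × Fqn))) :=
      Submodule.finrank_mono (sup_le hA hB)
    have hWne : 0 < finrank Fqn (span Fqn (W : Set Fqn)) := by
      obtain ⟨w, hwW, hw0⟩ : ∃ w ∈ W, w ≠ (0 : Fqn) := by
        by_contra h
        push_neg at h
        have : W = ⊥ := by
          rw [eq_bot_iff]; intro x hx; exact h x hx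
        rw [this, finrank_bot] at hW
        omega
      rw [finrank_pos_iff]
      exact ⟨⟨⟨w, subset_span hwW⟩, 0, by simp [Subtype.ext_iff, hw0]⟩⟩
    have hUspan := hU.1
    omega
  · -- intersection condition
    intro H hH
    let Kc : Submodule Fqn (V × Fqn) := H.comap (e : (V × Fqn) →ₗ[Fqn] V')
    have hKc : finrank Fqn Kc = r := by
      rw [show Kc = H.map (e.symm : V' →ₗ[Fqn] (V × Fqn)) from
        (Submodule.comap_equiv_eq_map_symm e H),
        LinearEquiv.finrank_map_eq e.symm H, hH]
    have heq : (U₀.map (eF : (V × Fqn) →ₗ[Fq] V')) ⊓ H.restrictScalars Fq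
        = (U₀ ⊓ Kc.restrictScalars Fq).map (eF : (V × Fqn) →ₗ[Fq] V') := by
      ext x
      simp only [Submodule.mem_inf, Submodule.mem_map_equiv, Submodule.restrictScalars_mem,
        Submodule.mem_comap]
      constructor
      · rintro ⟨h1, h2⟩
        refine ⟨h1, ?_⟩
        show (e : (V × Fqn) →ₗ[Fqn] V') (eF.symm x) ∈ H
        have : (e : (V × Fqn) →ₗ[Fqn] V') (eF.symm x) = x := by
          show e (eF.symm x) = x
          exact e.apply_symm_apply x
        rw [this]; exact h2
      · rintro ⟨h1, h2⟩
        refine ⟨h1, ?_⟩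
        have : (e : (V × Fqn) →ₗ[Fqn] V') (eF.symm x) = x := by
          show e (eF.symm x) = x
          exact e.apply_symm_apply x
        rw [← this]; exact h2
    rw [heq, LinearEquiv.finrank_map_eq eF]
    exact aux_core r k d s hrV U hU hd hdk W hW Kc hKc
end

section
/- If U_i is an (h,k_i)_q-evasive F_q-subspace of V_i = V(r_i, q^n) for i = 1,2, then U_1 ⊕ U_2 is an (h, k_1 + k_2 - h)_q-evasive F_q-subspace of V_1 ⊕ V_2. -/
open Module Submodule

set_option synthInstance.maxHeartbeats 1000000
set_option maxHeartbeats 1000000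

lemma evasive_aux {Fq Fqn V : Type*} [Field Fq] [Field Fqn] [Algebra Fq Fqn]
    [AddCommGroup V] [Module Fq V] [Module Fqn V] [IsScalarTower Fq Fqn V]
    [FiniteDimensional Fq Fqn] [FiniteDimensional Fqn V] (h k : ℕ) (U : Submodule Fq V)
    (hU : IsEvasive Fq Fqn h k U) (H : Submodule Fqn V) (hH : finrank Fqn H ≤ h) :
    finrank Fq ↥(U ⊓ H.restrictScalars Fq) + (h - finrank Fqn H) ≤ k := by
  have hVfq : FiniteDimensional Fq V := FiniteDimensional.trans Fq Fqn V
  obtain ⟨d, hd⟩ : ∃ d, h - finrank Fqn H = d := ⟨_, rfl⟩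
  induction d generalizing H with
  | zero =>
    have : finrank Fqn H = h := by omega
    simpa [hd] using hU.2 H this
  | succ d ih =>
    have hlt : finrank Fqn H < h := by omega
    -- find u ∈ U, u ∉ H
    have : ¬ (span Fqn (U : Set V) ≤ H) := by
      intro hle
      have h2 := Submodule.finrank_mono hle
      have h1 := hU.1
      omega
    obtain ⟨u, hu, hnot⟩ : ∃ u ∈ U, u ∉ H := by
      by_contra hc
      push_neg at hc
      exact this (span_le.mpr hc)
    have hune : u ≠ 0 := fun h0 => hnot (h0 ▸ H.zero_mem)
    set H' := H ⊔ (Fqn ∙ u) with hH'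
    have hfr : finrank Fqn H' = finrank Fqn H + 1 := by
      have hle : finrank Fqn H' ≤ finrank Fqn H + 1 := by
        calc finrank Fqn H' ≤ finrank Fqn H + finrank Fqn ((Fqn ∙ u) : Submodule Fqn V) :=
              Submodule.finrank_add_le_finrank_add_finrank H (Fqn ∙ u)
        _ = finrank Fqn H + 1 := by rw [finrank_span_singleton hune]
      have hgt : finrank Fqn H < finrank Fqn H' :=
        Submodule.finrank_lt_finrank_of_lt (lt_of_le_of_ne le_sup_left (by
          intro he
          exact hnot (he ▸ Submodule.mem_sup_right (Submodule.mem_span_singleton_self u))))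
      omega
    have hint : finrank Fq ↥(U ⊓ H.restrictScalars Fq) + 1
        ≤ finrank Fq ↥(U ⊓ H'.restrictScalars Fq) := by
      have hlt2 : (U ⊓ H.restrictScalars Fq) < (U ⊓ H'.restrictScalars Fq) := by
        refine lt_of_le_of_ne (inf_le_inf_left _ ?_) ?_
        · intro x hx; exact Submodule.mem_sup_left hx
        · intro he
          have hu' : u ∈ U ⊓ H'.restrictScalars Fq :=
            ⟨hu, Submodule.mem_sup_right (Submodule.mem_span_singleton_self u)⟩
          rw [← he] at hu'
          exact hnot hu'.2
      exact Submodule.finrank_lt_finrank_of_lt hlt2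
    have := ih H' (by omega) (by omega)
    omega

/-- the direct sum of an `(h,k₁)_q`-evasive and an `(h,k₂)_q`-evasive subspace
is `(h, k₁ + k₂ - h)_q`-evasive. -/
theorem stmt4 {Fq Fqn V₁ V₂ : Type*} [Field Fq] [Field Fqn] [Algebra Fq Fqn]
    [AddCommGroup V₁] [Module Fq V₁] [Module Fqn V₁] [IsScalarTower Fq Fqn V₁]
    [AddCommGroup V₂] [Module Fq V₂] [Module Fqn V₂] [IsScalarTower Fq Fqn V₂]
    [FiniteDimensional Fq Fqn] [FiniteDimensional Fqn V₁] [FiniteDimensional Fqn V₂]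
    (n r₁ r₂ h k₁ k₂ : ℕ) (hn : finrank Fq Fqn = n)
    (hr₁ : finrank Fqn V₁ = r₁) (hr₂ : finrank Fqn V₂ = r₂)
    (U₁ : Submodule Fq V₁) (U₂ : Submodule Fq V₂)
    (hU₁ : IsEvasive Fq Fqn h k₁ U₁) (hU₂ : IsEvasive Fq Fqn h k₂ U₂) :
    IsEvasive Fq Fqn h (k₁ + k₂ - h) (U₁.prod U₂) := by
  have hV1 : FiniteDimensional Fq V₁ := FiniteDimensional.trans Fq Fqn V₁
  have hV2 : FiniteDimensional Fq V₂ := FiniteDimensional.trans Fq Fqn V₂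
  constructor
  · -- span condition
    have hle : (span Fqn (U₁ : Set V₁)).map (LinearMap.inl Fqn V₁ V₂)
        ≤ span Fqn ((U₁.prod U₂ : Submodule Fq (V₁ × V₂)) : Set (V₁ × V₂)) := by
      rw [Submodule.map_span]
      apply span_mono
      rintro _ ⟨x, hx, rfl⟩
      exact ⟨hx, U₂.zero_mem⟩
    have heq : finrank Fqn ((span Fqn (U₁ : Set V₁)).map (LinearMap.inl Fqn V₁ V₂))
        = finrank Fqn (span Fqn (U₁ : Set V₁)) :=
      (LinearEquiv.finrank_eq (Submodule.equivMapOfInjective _ LinearMap.inl_injective _)).symm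
    have := Submodule.finrank_mono hle
    have h1 := hU₁.1
    omega
  · intro H hH
    set sndn := LinearMap.snd Fqn V₁ V₂ with hsndn
    set t := finrank Fqn (H.map sndn) with htdef
    have ht : t ≤ h := hH ▸ Submodule.finrank_map_le _ H
    set H₀ := H ⊓ LinearMap.ker sndn with hH₀
    set H₁ := H₀.map (LinearMap.fst Fqn V₁ V₂) with hH₁
    -- rank-nullity: finrank H₀ + t = h
    have e1 : finrank Fqn H₀ + t = h := by
      set f := sndn.comp H.subtype with hf
      have hrn := LinearMap.finrank_range_add_finrank_ker f
      have hr : LinearMap.range f = H.map sndn := by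
        rw [hf, LinearMap.range_comp, Submodule.range_subtype]
      have hk : LinearMap.ker f = H₀.comap H.subtype := by
        rw [hf, LinearMap.ker_comp, hH₀, Submodule.comap_inf,
          Submodule.comap_subtype_self]
        simp
      have hkeq : finrank Fqn (LinearMap.ker f) = finrank Fqn H₀ := by
        rw [hk]
        exact LinearEquiv.finrank_eq (Submodule.comapSubtypeEquivOfLe inf_le_left)
      rw [hr, hkeq] at hrn
      have : finrank Fqn H = h := hH
      have hfh : finrank Fqn ↥H = h := hH
      omega
    have e2 : finrank Fqn H₁ ≤ finrank Fqn H₀ := Submodule.finrank_map_le _ H₀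
    -- W and the projection g
    set W := (U₁.prod U₂) ⊓ H.restrictScalars Fq with hW
    set g := (LinearMap.snd Fq V₁ V₂).comp W.subtype with hg
    have hrn2 := LinearMap.finrank_range_add_finrank_ker g
    -- range g bound
    have hrg : finrank Fq (LinearMap.range g) ≤
        finrank Fq ↥(U₂ ⊓ (H.map sndn).restrictScalars Fq) := by
      apply Submodule.finrank_mono
      rintro _ ⟨w, rfl⟩
      exact ⟨w.2.1.2, ⟨w.1, w.2.2, rfl⟩⟩
    -- ker g bound via φ
    set φ := (LinearMap.fst Fq V₁ V₂).comp (W.subtype.comp (LinearMap.ker g).subtype) with hφ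
    have hφinj : Function.Injective φ := by
      intro a b hab
      have ha2 : (a.1.1 : V₁ × V₂).2 = 0 := a.2
      have hb2 : (b.1.1 : V₁ × V₂).2 = 0 := b.2
      have h1 : (a.1.1 : V₁ × V₂).1 = (b.1.1 : V₁ × V₂).1 := hab
      apply Subtype.ext
      apply Subtype.ext
      exact Prod.ext h1 (by rw [ha2, hb2])
    have hφrange : LinearMap.range φ ≤ U₁ ⊓ H₁.restrictScalars Fq := by
      rintro _ ⟨a, rfl⟩
      refine ⟨a.1.2.1.1, ?_⟩
      have ha2 : (a.1.1 : V₁ × V₂).2 = 0 := a.2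
      exact ⟨a.1.1, ⟨a.1.2.2, ha2⟩, rfl⟩
    have hkg : finrank Fq (LinearMap.ker g) ≤ finrank Fq ↥(U₁ ⊓ H₁.restrictScalars Fq) := by
      rw [← LinearMap.finrank_range_of_inj hφinj]
      exact Submodule.finrank_mono hφrange
    -- apply evasiveness
    have A2 := evasive_aux h k₂ U₂ hU₂ (H.map sndn) ht
    have A1 := evasive_aux h k₁ U₁ hU₁ H₁ (by omega)
    omega
end

section
/- If for each 1 ≤ t ≤ h the F_q-subspace U_i of V_i = V(r_i,q^n) is (t, λt)_q-evasive, for i = 1,2 and a fixed positive integer λ, then U_1 ⊕ U_2 is (t, λt)_q-evasive in V_1 ⊕ V_2 for each 1 ≤ t ≤ h. -/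
open Module Submodule

/-- Auxiliary: an evasive family gives a bound for any subspace of dimension `≤ h`,
including dimension 0. -/
lemma evasive_bound {Fq Fqn V : Type*} [Field Fq] [Field Fqn] [Algebra Fq Fqn]
    [AddCommGroup V] [Module Fq V] [Module Fqn V] [IsScalarTower Fq Fqn V]
    [FiniteDimensional Fqn V] (h l : ℕ) (U : Submodule Fq V)
    (hU : ∀ t, 1 ≤ t → t ≤ h → IsEvasive Fq Fqn t (l * t) U)
    (H : Submodule Fqn V) (hle : finrank Fqn H ≤ h) :
    finrank Fq ↥(U ⊓ H.restrictScalars Fq) ≤ l * finrank Fqn H := by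
  rcases Nat.eq_zero_or_pos (finrank Fqn H) with h0 | hpos
  · have hb : H = ⊥ := Submodule.finrank_eq_zero.mp h0
    subst hb
    rw [Submodule.restrictScalars_bot, inf_bot_eq, finrank_bot]
    exact Nat.zero_le _
  · exact (hU _ hpos hle).2 H rfl

set_option maxHeartbeats 1000000 in
set_option synthInstance.maxHeartbeats 200000 in
/-- if `U₁, U₂` are `(t, λt)_q`-evasive for all `1 ≤ t ≤ h`, then so is
their direct sum. -/
theorem stmt5 {Fq Fqn V₁ V₂ : Type*} [Field Fq] [Field Fqn] [Algebra Fq Fqn]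
    [AddCommGroup V₁] [Module Fq V₁] [Module Fqn V₁] [IsScalarTower Fq Fqn V₁]
    [AddCommGroup V₂] [Module Fq V₂] [Module Fqn V₂] [IsScalarTower Fq Fqn V₂]
    [FiniteDimensional Fq Fqn] [FiniteDimensional Fqn V₁] [FiniteDimensional Fqn V₂]
    (n r₁ r₂ h l : ℕ) (hl : 0 < l) (hn : finrank Fq Fqn = n)
    (hr₁ : finrank Fqn V₁ = r₁) (hr₂ : finrank Fqn V₂ = r₂)
    (U₁ : Submodule Fq V₁) (U₂ : Submodule Fq V₂)
    (hU₁ : ∀ t, 1 ≤ t → t ≤ h → IsEvasive Fq Fqn t (l * t) U₁)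
    (hU₂ : ∀ t, 1 ≤ t → t ≤ h → IsEvasive Fq Fqn t (l * t) U₂) :
    ∀ t, 1 ≤ t → t ≤ h → IsEvasive Fq Fqn t (l * t) (U₁.prod U₂) := by
  haveI : FiniteDimensional Fq V₁ := Module.Finite.trans Fqn V₁
  haveI : FiniteDimensional Fq V₂ := Module.Finite.trans Fqn V₂
  intro t ht1 hth
  constructor
  · -- spanning part
    have h1 := (hU₁ t ht1 hth).1
    have hmap : (span Fqn (U₁ : Set V₁)).map (LinearMap.inl Fqn V₁ V₂) ≤
        span Fqn ((U₁.prod U₂ : Submodule Fq (V₁ × V₂)) : Set (V₁ × V₂)) := by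
      rw [Submodule.map_span]
      apply span_mono
      rintro _ ⟨x, hx, rfl⟩
      exact ⟨hx, U₂.zero_mem⟩
    calc t ≤ finrank Fqn (span Fqn (U₁ : Set V₁)) := h1
      _ = finrank Fqn ((span Fqn (U₁ : Set V₁)).map (LinearMap.inl Fqn V₁ V₂)) :=
          (LinearEquiv.finrank_eq
            (Submodule.equivMapOfInjective _ LinearMap.inl_injective _))
      _ ≤ finrank Fqn (span Fqn ((U₁.prod U₂ : Submodule Fq (V₁ × V₂)) : Set (V₁ × V₂))) :=
          Submodule.finrank_mono hmap
  · intro H hH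
    -- decompose H via the second projection
    set K : Submodule Fqn (V₁ × V₂) := H ⊓ LinearMap.ker (LinearMap.snd Fqn V₁ V₂) with hKdef
    set H₁ : Submodule Fqn V₁ := K.map (LinearMap.fst Fqn V₁ V₂) with hH₁def
    set H₂ : Submodule Fqn V₂ := H.map (LinearMap.snd Fqn V₁ V₂) with hH₂def
    -- finrank K = finrank H₁
    have hKH₁ : finrank Fqn K = finrank Fqn H₁ := by
      have hinj : Function.Injective ((LinearMap.fst Fqn V₁ V₂).comp K.subtype) := by
        rintro ⟨x, hx⟩ ⟨y, hy⟩ hxy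
        have hx2 : x.2 = 0 := hx.2
        have hy2 : y.2 = 0 := hy.2
        have hxy1 : x.1 = y.1 := hxy
        ext <;> simp [hxy1, hx2, hy2]
      have hrg : LinearMap.range ((LinearMap.fst Fqn V₁ V₂).comp K.subtype) = H₁ := by
        rw [LinearMap.range_comp, Submodule.range_subtype]
      have heq := LinearEquiv.finrank_eq (LinearEquiv.ofInjective _ hinj)
      rw [hrg] at heq
      exact heq
    -- rank-nullity over Fqn for H
    have hsplit : finrank Fqn H₂ + finrank Fqn K = t := by
      have hrn := LinearMap.finrank_range_add_finrank_ker
        ((LinearMap.snd Fqn V₁ V₂).comp H.subtype)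
      have hrange : LinearMap.range ((LinearMap.snd Fqn V₁ V₂).comp H.subtype) = H₂ := by
        rw [LinearMap.range_comp, Submodule.range_subtype]
      have hker : finrank Fqn
          (LinearMap.ker ((LinearMap.snd Fqn V₁ V₂).comp H.subtype)) = finrank Fqn K := by
        rw [LinearMap.ker_comp]
        rw [← Submodule.finrank_map_subtype_eq H (Submodule.comap H.subtype
          (LinearMap.ker (LinearMap.snd Fqn V₁ V₂))), Submodule.map_comap_subtype,
          hKdef, inf_comm]
      rw [hrange, hker, hH] at hrn
      exact hrn
    have ht₁ : finrank Fqn H₁ ≤ h := by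
      have : finrank Fqn H₁ ≤ t := by omega
      omega
    have ht₂ : finrank Fqn H₂ ≤ h := by omega
    -- Fq side
    set W : Submodule Fq (V₁ × V₂) := (U₁.prod U₂) ⊓ H.restrictScalars Fq with hWdef
    set g : W →ₗ[Fq] V₂ := (LinearMap.snd Fq V₁ V₂).comp W.subtype with hgdef
    have hrn := LinearMap.finrank_range_add_finrank_ker g
    -- range bound
    have hrange_le : LinearMap.range g ≤ U₂ ⊓ H₂.restrictScalars Fq := by
      rintro _ ⟨⟨x, hx⟩, rfl⟩
      refine ⟨hx.1.2, ?_⟩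
      exact ⟨x, hx.2, rfl⟩
    have hrange_bd : finrank Fq (LinearMap.range g) ≤ l * finrank Fqn H₂ :=
      le_trans (Submodule.finrank_mono hrange_le)
        (evasive_bound h l U₂ hU₂ H₂ ht₂)
    -- kernel bound
    set e : LinearMap.ker g →ₗ[Fq] V₁ :=
      (LinearMap.fst Fq V₁ V₂).comp (W.subtype.comp (LinearMap.ker g).subtype) with hedef
    have heinj : Function.Injective e := by
      rintro ⟨⟨x, hx⟩, hx0⟩ ⟨⟨y, hy⟩, hy0⟩ hxy
      have hx2 : x.2 = 0 := hx0
      have hy2 : y.2 = 0 := hy0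
      have hxy1 : x.1 = y.1 := hxy
      ext <;> simp_all
    have hker_range : LinearMap.range e ≤ U₁ ⊓ H₁.restrictScalars Fq := by
      rintro _ ⟨⟨⟨x, hx⟩, hx0⟩, rfl⟩
      have hx2 : x.2 = 0 := hx0
      refine ⟨hx.1.1, ?_⟩
      refine ⟨x, ⟨hx.2, ?_⟩, rfl⟩
      simpa [LinearMap.mem_ker] using hx2
    have hker_bd : finrank Fq (LinearMap.ker g) ≤ l * finrank Fqn H₁ := by
      have he2 : (↥(LinearMap.ker g) ≃ₗ[Fq] ↥(LinearMap.range e)) :=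
        LinearEquiv.ofInjective e heinj
      rw [he2.finrank_eq]
      exact le_trans (Submodule.finrank_mono hker_range)
        (evasive_bound h l U₁ hU₁ H₁ ht₁)
    -- combine
    calc finrank Fq W = finrank Fq (LinearMap.range g) + finrank Fq (LinearMap.ker g) :=
          hrn.symm
      _ ≤ l * finrank Fqn H₂ + l * finrank Fqn H₁ := Nat.add_le_add hrange_bd hker_bd
      _ = l * t := by
          have htt : finrank Fqn H₂ + finrank Fqn H₁ = t := by omega
          rw [← Nat.mul_add, htt]
end

section
/- (Singleton-like bound) Let C be an additive subset of Hom_{F_q}(U,V) where dim_q U = m and dim_q V = n, such that every non-zero map in C has rank at least δ. Then |C| ≤ q^{min(m,n)(max(m,n) - δ + 1)}. -/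
open Module

private lemma stmt11_aux {Fq M N : Type*} [Field Fq] [Fintype Fq]
    [AddCommGroup M] [Module Fq M] [AddCommGroup N] [Module Fq N]
    [FiniteDimensional Fq M] [FiniteDimensional Fq N] (U' : Submodule Fq M) (n : ℕ)
    (hn : finrank Fq N = n) (k : ℕ) (hdim : finrank Fq U' = k) :
    Nat.card (U' →ₗ[Fq] N) = Fintype.card Fq ^ (k * n) := by
  haveI : Finite (U' →ₗ[Fq] N) := Module.finite_of_finite Fq
  haveI : Fintype (U' →ₗ[Fq] N) := Fintype.ofFinite _
  rw [Nat.card_eq_fintype_card, card_eq_pow_finrank (K := Fq), Module.finrank_linearMap, hdim, hn]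

/-- Singleton-like bound: if `C` is an additive subgroup of
`Hom_{F_q}(U,V)` with `dim U = m`, `dim V = n`, all of whose non-zero members have rank at
least `δ`, then `|C| ≤ q^{min(m,n)(max(m,n) - δ + 1)}`. -/
theorem stmt11 {Fq M N : Type*} [Field Fq] [Fintype Fq]
    [AddCommGroup M] [Module Fq M] [AddCommGroup N] [Module Fq N]
    [FiniteDimensional Fq M] [FiniteDimensional Fq N]
    (m n δ : ℕ) (hm : finrank Fq M = m) (hn : finrank Fq N = n)
    (C : AddSubgroup (M →ₗ[Fq] N))
    (hC : ∀ f ∈ C, f ≠ 0 → δ ≤ finrank Fq (LinearMap.range f)) :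
    Nat.card C ≤ (Fintype.card Fq) ^ (min m n * (max m n - δ + 1)) := by
  have hq : 1 ≤ Fintype.card Fq := Fintype.card_pos
  haveI : Finite M := Module.finite_of_finite Fq
  haveI : Finite N := Module.finite_of_finite Fq
  -- trivial case: C = {0}
  by_cases hδm : m < δ
  · have hone : ∀ f ∈ C, f = 0 := by
      intro f hf
      by_contra h0
      have h1 := hC f hf h0
      have h2 : finrank Fq (LinearMap.range f) ≤ m := hm ▸ LinearMap.finrank_range_le f
      omega
    have hs : Subsingleton C := ⟨fun a b => Subtype.ext (by rw [hone a a.2, hone b b.2])⟩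
    have h1 : Nat.card C ≤ 1 :=
      Nat.card_le_card_of_injective (fun _ : C => ())
        (fun a b _ => Subsingleton.elim a b) |>.trans (by simp)
    exact h1.trans (Nat.one_le_iff_ne_zero.mpr (pow_ne_zero _ (by omega)))
  push_neg at hδm
  -- main case: construct submodule U' of dimension m - δ + 1 (with k := m - δ + 1 ≤ m if δ ≥ 1,
  -- and k := m if δ = 0)
  set k : ℕ := min (m - δ + 1) m with hk
  have hkm : k ≤ m := min_le_right _ _
  obtain ⟨b⟩ : Nonempty (Basis (Fin m) Fq M) := ⟨(finBasis Fq M).reindex (finCongr hm)⟩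
  set U' : Submodule Fq M := Submodule.span Fq (Set.range fun i : Fin k => b (Fin.castLE hkm i))
    with hU'
  clear_value U'
  have hli : LinearIndependent Fq (fun i : Fin k => b (Fin.castLE hkm i)) :=
    b.linearIndependent.comp _ (Fin.castLE_injective hkm)
  have hdim : finrank Fq U' = k := by
    rw [hU', finrank_span_eq_card hli, Fintype.card_fin]
  -- restriction map is injective on C
  have hinj : Function.Injective (fun f : C => (f : M →ₗ[Fq] N).domRestrict U') := by
    intro f g hfg
    ext : 1
    by_contra hne
    set F : M →ₗ[Fq] N := (f : M →ₗ[Fq] N) - (g : M →ₗ[Fq] N) with hF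
    have hsub : F ≠ 0 := sub_ne_zero.mpr hne
    have hmem : F ∈ C := sub_mem f.2 g.2
    have hrank := hC _ hmem hsub
    -- U' ≤ ker (f - g)
    have hker : U' ≤ LinearMap.ker F := by
      rw [hU', Submodule.span_le]
      rintro x ⟨i, rfl⟩
      have : (f : M →ₗ[Fq] N).domRestrict U' = (g : M →ₗ[Fq] N).domRestrict U' := hfg
      have hx : b (Fin.castLE hkm i) ∈ U' := by
        rw [hU']; exact Submodule.subset_span ⟨i, rfl⟩
      have := congrArg (fun h => h ⟨b (Fin.castLE hkm i), hx⟩) this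
      simp only [LinearMap.domRestrict_apply] at this
      simp [hF, LinearMap.mem_ker, LinearMap.sub_apply, this]
    have h1 : k ≤ finrank Fq (LinearMap.ker F) :=
      hdim ▸ Submodule.finrank_mono hker
    have h2 := LinearMap.finrank_range_add_finrank_ker F
    rw [hm] at h2
    rcases Nat.eq_zero_or_pos δ with h0 | hpos
    · -- δ = 0 : the kernel is everything, so F = 0
      have hmk : m ≤ k := by omega
      have hker_top : LinearMap.ker F = ⊤ := by
        apply Submodule.eq_top_of_finrank_eq
        rw [hm]
        exact le_antisymm (hm ▸ (LinearMap.ker F).finrank_le) (le_trans hmk h1)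
      exact hsub (LinearMap.ker_eq_top.mp hker_top)
    · have hk1 : m - δ + 1 ≤ k := by omega
      omega
  haveI : Finite (U' →ₗ[Fq] N) := Module.finite_of_finite Fq
  have hcard : Nat.card C ≤ Nat.card (U' →ₗ[Fq] N) := Nat.card_le_card_of_injective _ hinj
  have hHom : Nat.card (U' →ₗ[Fq] N) = Fintype.card Fq ^ (k * n) :=
    stmt11_aux U' n hn k hdim
  refine (hcard.trans_eq hHom).trans (Nat.pow_le_pow_right hq ?_)
  -- exponent inequality: k * n ≤ min m n * (max m n - δ + 1)
  rcases le_total m n with hmn | hmn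
  · rw [min_eq_left hmn, max_eq_right hmn]
    rcases Nat.eq_zero_or_pos δ with h0 | h1
    · subst h0
      simp only [hk]
      have : min (m - 0 + 1) m = m := by omega
      rw [this, Nat.sub_zero]
      nlinarith
    · have hk' : k = m - δ + 1 := by omega
      rw [hk']
      have : m - δ + 1 = m + 1 - δ := by omega
      have h2 : n - δ + 1 = n + 1 - δ := by omega
      zify [show δ ≤ m + 1 by omega, show δ ≤ n + 1 by omega, this, h2]
      nlinarith [hmn, h1]
  · rw [min_eq_right hmn, max_eq_left hmn]
    have : k ≤ m - δ + 1 := min_le_left _ _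
    nlinarith
end

section
/- If U is an (r-1,k)_q-evasive F_q-subspace of V = V(r,q^n) with k < (r-1)n, then dim_q U ≤ n + k - 1. -/
open Module Submodule

/-- finrank of sup with a span of a vector outside. -/
lemma aux_sup_span {K V : Type*} [Field K] [AddCommGroup V] [Module K V]
    [FiniteDimensional K V] (W : Submodule K V) {x : V} (hx : x ∉ W) :
    finrank K ↥(W ⊔ span K {x}) = finrank K W + 1 := by
  have hx0 : x ≠ 0 := fun h => hx (h ▸ W.zero_mem)
  have hinf : W ⊓ span K {x} = ⊥ := by
    rw [eq_bot_iff]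
    rintro y ⟨hyW, hy⟩
    obtain ⟨a, rfl⟩ := mem_span_singleton.mp hy
    rcases eq_or_ne a 0 with rfl | ha
    · simp
    · exact absurd (by simpa [ha] using W.smul_mem a⁻¹ hyW) hx
  have h := Submodule.finrank_sup_add_finrank_inf_eq W (span K {x})
  rw [hinf, finrank_span_singleton hx0, finrank_bot] at h
  omega

/-- covering cardinality inequality. -/
lemma aux_cover {α ι : Type*} [DecidableEq α] [Fintype ι] [Nonempty ι]
    (A : ι → Finset α) (b c : Finset α) (hb : ∀ i, b ⊆ A i) (hbc : b ⊆ c)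
    (hcov : ∀ x ∈ c, ∃ i, x ∈ A i) :
    c.card + (Fintype.card ι - 1) * b.card ≤ ∑ i, (A i).card := by
  classical
  have h1 : c \ b ⊆ Finset.univ.biUnion (fun i => A i \ b) := by
    intro x hx
    rw [Finset.mem_sdiff] at hx
    obtain ⟨i, hi⟩ := hcov x hx.1
    simp only [Finset.mem_biUnion, Finset.mem_univ, Finset.mem_sdiff, true_and]
    exact ⟨i, hi, hx.2⟩
  have h2 : (c \ b).card ≤ ∑ i, (A i \ b).card :=
    le_trans (Finset.card_le_card h1) Finset.card_biUnion_le
  have h3 : ∀ i ∈ Finset.univ, (A i).card = (A i \ b).card + b.card := fun i _ =>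
    (Finset.card_sdiff_add_card_eq_card (hb i)).symm
  have h4 : (c \ b).card + b.card = c.card := Finset.card_sdiff_add_card_eq_card hbc
  have h5 : ∑ i, (A i).card = (∑ i, (A i \ b).card) + Fintype.card ι * b.card := by
    rw [Finset.sum_congr rfl h3, Finset.sum_add_distrib, Finset.sum_const, Finset.card_univ,
      smul_eq_mul]
  have hN : 1 ≤ Fintype.card ι := Fintype.card_pos
  have h6 : Fintype.card ι * b.card = (Fintype.card ι - 1) * b.card + b.card := by
    have h7 : Fintype.card ι - 1 + 1 = Fintype.card ι := Nat.sub_add_cancel hN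
    calc Fintype.card ι * b.card = (Fintype.card ι - 1 + 1) * b.card := by rw [h7]
    _ = (Fintype.card ι - 1) * b.card + b.card := by ring
  omega

/-- an `(r-1,k)_q`-evasive subspace of `V(r,q^n)` with `k < (r-1)n` has
`F_q`-dimension at most `n + k - 1`. -/
theorem stmt12 {Fq Fqn V : Type*} [Field Fq] [Fintype Fq] [Field Fqn] [Algebra Fq Fqn]
    [AddCommGroup V] [Module Fq V] [Module Fqn V] [IsScalarTower Fq Fqn V]
    [FiniteDimensional Fq Fqn] [FiniteDimensional Fqn V]
    (n r k : ℕ) (hn : finrank Fq Fqn = n) (hr : finrank Fqn V = r)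
    (U : Submodule Fq V) (hU : IsEvasive Fq Fqn (r - 1) k U)
    (hk : k < (r - 1) * n) :
    finrank Fq U ≤ n + k - 1 := by
  classical
  haveI : FiniteDimensional Fq V := FiniteDimensional.trans Fq Fqn V
  haveI : Finite V := Module.finite_of_finite Fq
  haveI : Fintype V := Fintype.ofFinite V
  haveI : Finite Fqn := Module.finite_of_finite Fq
  haveI : Fintype Fqn := Fintype.ofFinite Fqn
  set q := Fintype.card Fq with hqdef
  have hq : 2 ≤ q := Fintype.one_lt_card
  have hn1 : 1 ≤ n := hn ▸ Module.finrank_pos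
  have hqn : Fintype.card Fqn = q ^ n := by rw [card_eq_pow_finrank (K := Fq), hn]
  have hFS : ∀ S : Submodule Fq V, ((S : Set V).toFinset).card = q ^ finrank Fq S := by
    intro S
    rw [Set.toFinset_card]
    exact card_eq_pow_finrank (K := Fq)
  have hres : ∀ X : Submodule Fqn V,
      finrank Fq (X.restrictScalars Fq) = n * finrank Fqn X := by
    intro X
    have h1 : finrank Fq Fqn * finrank Fqn (X.restrictScalars Fq) =
        finrank Fq (X.restrictScalars Fq) :=
      Module.finrank_mul_finrank Fq Fqn (X.restrictScalars Fq)
    have h2 : finrank Fqn (X.restrictScalars Fq) = finrank Fqn X :=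
      (X.restrictScalarsEquiv Fq).finrank_eq
    rw [h2, hn] at h1
    omega
  have hdimV : finrank Fq V = n * r := by
    rw [← Module.finrank_mul_finrank Fq Fqn V, hn, hr]
  by_contra hcon
  push_neg at hcon
  have hU' : n + k ≤ finrank Fq U := by omega
  have hrm : 2 ≤ r := by
    have h0 : 0 < (r - 1) * n := Nat.lt_of_le_of_lt (Nat.zero_le k) hk
    rcases Nat.eq_zero_or_pos (r - 1) with h | h
    · rw [h, zero_mul] at h0; omega
    · omega
  -- main inductive claim
  have main : ∀ m : ℕ, ∀ W : Submodule Fqn V, finrank Fqn W + m = r - 1 →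
      q ^ finrank Fq ↥(U ⊓ W.restrictScalars Fq) * q ^ (n * m) ≤ q ^ k := by
    intro m
    induction m with
    | zero =>
      intro W hW
      have h := hU.2 W (by omega)
      simpa using Nat.pow_le_pow_right (by omega) h
    | succ m ih =>
      intro W hW
      set j := finrank Fqn W with hj
      -- find e ∉ W and f ∉ W ⊔ span e
      have hWne : W ≠ ⊤ := by
        intro h
        rw [h, finrank_top, hr] at hj
        omega
      obtain ⟨e, he⟩ : ∃ e, e ∉ W := by
        by_contra h
        push_neg at h
        exact hWne (Submodule.eq_top_iff'.mpr h)
      have hW1 : finrank Fqn ↥(W ⊔ span Fqn {e}) = j + 1 := aux_sup_span W he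
      have hW1ne : W ⊔ span Fqn {e} ≠ ⊤ := by
        intro h
        rw [h, finrank_top, hr] at hW1
        omega
      obtain ⟨f, hf⟩ : ∃ f, f ∉ W ⊔ span Fqn {e} := by
        by_contra h
        push_neg at h
        exact hW1ne (Submodule.eq_top_iff'.mpr h)
      have hfW : f ∉ W := fun h => hf (Submodule.mem_sup_left h)
      have heW1 : e ∈ W ⊔ span Fqn {e} :=
        Submodule.mem_sup_right (mem_span_singleton_self e)
      have hgen : ∀ c : Fqn, e + c • f ∉ W := by
        intro c hc
        rcases eq_or_ne c 0 with rfl | hc0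
        · rw [zero_smul, add_zero] at hc; exact he hc
        · apply hf
          have h1 : e + c • f ∈ W ⊔ span Fqn {e} := Submodule.mem_sup_left hc
          have h2 : c • f ∈ W ⊔ span Fqn {e} := by
            have h3 := Submodule.sub_mem _ h1 heW1
            simpa using h3
          have h4 := Submodule.smul_mem _ c⁻¹ h2
          rwa [smul_smul, inv_mul_cancel₀ hc0, one_smul] at h4
      -- the pencil of (j+1)-spaces through W inside T2
      set g : Option Fqn → V := fun i => i.elim f (fun c => e + c • f) with hgdef
      have hg : ∀ i, g i ∉ W := by rintro (_ | c); exacts [hfW, hgen c]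
      set T : Option Fqn → Submodule Fqn V := fun i => W ⊔ span Fqn {g i} with hTdef
      have hTrank : ∀ i, finrank Fqn ↥(T i) = j + 1 := fun i => aux_sup_span W (hg i)
      set T2 : Submodule Fqn V := (W ⊔ span Fqn {e}) ⊔ span Fqn {f} with hT2
      have hT2rank : finrank Fqn ↥T2 = j + 2 := by
        rw [hT2, aux_sup_span _ hf, hW1]
      have hWT : ∀ i, W ≤ T i := fun i => le_sup_left
      have hWT2 : W ≤ T2 := le_trans le_sup_left le_sup_left
      have hcov : ∀ x ∈ T2, ∃ i, x ∈ T i := by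
        intro x hx
        rw [hT2] at hx
        obtain ⟨y, hy, z, hz, rfl⟩ := Submodule.mem_sup.mp hx
        obtain ⟨w, hw, u, hu, rfl⟩ := Submodule.mem_sup.mp hy
        obtain ⟨a, rfl⟩ := mem_span_singleton.mp hu
        obtain ⟨b, rfl⟩ := mem_span_singleton.mp hz
        rcases eq_or_ne a 0 with rfl | ha
        · refine ⟨none, ?_⟩
          have : w + (0 : Fqn) • e + b • f = w + b • f := by
            rw [zero_smul, add_zero]
          rw [this]
          exact Submodule.add_mem _ (Submodule.mem_sup_left hw)
            (Submodule.mem_sup_right (Submodule.smul_mem _ b (mem_span_singleton_self f)))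
        · refine ⟨some (a⁻¹ * b), ?_⟩
          have hxeq : w + a • e + b • f = w + a • (e + (a⁻¹ * b) • f) := by
            rw [smul_add, smul_smul, ← mul_assoc, mul_inv_cancel₀ ha, one_mul, add_assoc]
          rw [hxeq]
          exact Submodule.add_mem _ (Submodule.mem_sup_left hw)
            (Submodule.mem_sup_right (Submodule.smul_mem _ a (mem_span_singleton_self _)))
      -- Finset counting
      set F : Submodule Fq V → Finset V := fun S => (S : Set V).toFinset with hF
      have hFmono : ∀ {S S' : Submodule Fq V}, S ≤ S' → F S ⊆ F S' := by
        intro S S' h x hx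
        simp only [hF, Set.mem_toFinset] at hx ⊢
        exact h hx
      set b := F (U ⊓ W.restrictScalars Fq) with hbdef
      set c := F (U ⊓ T2.restrictScalars Fq) with hcdef
      set A : Option Fqn → Finset V := fun i => F (U ⊓ (T i).restrictScalars Fq) with hAdef
      have hbA : ∀ i, b ⊆ A i := fun i =>
        hFmono (inf_le_inf_left U (fun x hx => hWT i hx))
      have hbc : b ⊆ c := hFmono (inf_le_inf_left U (fun x hx => hWT2 hx))
      have hcovA : ∀ x ∈ c, ∃ i, x ∈ A i := by
        intro x hx
        simp only [hcdef, hF, Set.mem_toFinset, Submodule.mem_inf] at hx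
        obtain ⟨i, hi⟩ := hcov x hx.2
        refine ⟨i, ?_⟩
        simp only [hAdef, hF, Set.mem_toFinset, Submodule.mem_inf]
        exact ⟨hx.1, hi⟩
      have hcount := aux_cover A b c hbA hbc hcovA
      have hcardOpt : Fintype.card (Option Fqn) = q ^ n + 1 := by
        rw [Fintype.card_option, hqn]
      -- abbreviations for dimensions
      set dB := finrank Fq ↥(U ⊓ W.restrictScalars Fq) with hdB
      set dC := finrank Fq ↥(U ⊓ T2.restrictScalars Fq) with hdC
      -- rewrite the counting inequality
      have e1 : q ^ dC + q ^ n * q ^ dB ≤ ∑ i, (A i).card := by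
        have hbcard : b.card = q ^ dB := hFS _
        have hccard : c.card = q ^ dC := hFS _
        rw [hcardOpt] at hcount
        simpa [hbcard, hccard] using hcount
      have e2 : (∑ i, (A i).card) * q ^ (n * m) ≤ (q ^ n + 1) * q ^ k := by
        rw [Finset.sum_mul]
        calc ∑ i, (A i).card * q ^ (n * m)
            ≤ ∑ _i : Option Fqn, q ^ k := by
              refine Finset.sum_le_sum fun i _ => ?_
              have := ih (T i) (by rw [hTrank i]; omega)
              rw [hAdef, hFS]
              exact this
          _ = (q ^ n + 1) * q ^ k := by
              rw [Finset.sum_const, Finset.card_univ, hcardOpt, smul_eq_mul]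
      have e3 : q ^ (dC + n * m) + q ^ (dB + n * (m + 1)) ≤ q ^ (n + k) + q ^ k := by
        have h1 : (q ^ dC + q ^ n * q ^ dB) * q ^ (n * m) ≤ (q ^ n + 1) * q ^ k :=
          le_trans (Nat.mul_le_mul_right _ e1) e2
        have h2 : (q ^ dC + q ^ n * q ^ dB) * q ^ (n * m) =
            q ^ (dC + n * m) + q ^ (dB + n * (m + 1)) := by
          rw [add_mul, ← pow_add, mul_assoc, ← pow_add, ← pow_add]
          congr 2
          ring
        have h3 : (q ^ n + 1) * q ^ k = q ^ (n + k) + q ^ k := by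
          rw [add_mul, one_mul, ← pow_add]
        rw [← h2, ← h3]
        exact h1
      -- lower bound on dC
      have e4 : n + k ≤ dC + n * m := by
        have hsup := Submodule.finrank_sup_add_finrank_inf_eq U (T2.restrictScalars Fq)
        have h1 : finrank Fq ↥(U ⊔ T2.restrictScalars Fq) ≤ finrank Fq V :=
          Submodule.finrank_le _
        have h2 : finrank Fq (T2.restrictScalars Fq) = n * (j + 2) := by
          rw [hres, hT2rank]
        have h3 : n * (j + 2) + n * m = n * r := by
          rw [← Nat.mul_add]
          congr 1
          omega
        omega
      have e5 : q ^ (n + k) ≤ q ^ (dC + n * m) := Nat.pow_le_pow_right (by omega) e4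
      have e6 : q ^ (dB + n * (m + 1)) ≤ q ^ k := by omega
      rw [← pow_add]
      exact e6
  -- conclude
  have hfin := main (r - 1) ⊥ (by simp)
  have hbot : U ⊓ (⊥ : Submodule Fqn V).restrictScalars Fq = ⊥ := by
    rw [Submodule.restrictScalars_bot, inf_bot_eq]
  rw [hbot] at hfin
  simp only [finrank_bot, pow_zero, one_mul] at hfin
  have hle : n * (r - 1) ≤ k := (Nat.pow_le_pow_iff_right (by omega)).mp hfin
  rw [Nat.mul_comm] at hle
  omega
end

section
/- If U is an (r-1,k)_q-evasive F_q-subspace of V = V(r,q^n) with k < r - 2 + n/(r-1), then dim_q U ≤ n + k - r + 1. -/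
open Module Submodule

set_option maxHeartbeats 1000000

/-- an `(r-1,k)_q`-evasive subspace of `V(r,q^n)` with `k < r - 2 + n/(r-1)`
(inequality over the rationals) has `F_q`-dimension at most `n + k - r + 1`. -/
theorem stmt13 {Fq Fqn V : Type*} [Field Fq] [Fintype Fq] [Field Fqn] [Algebra Fq Fqn]
    [AddCommGroup V] [Module Fq V] [Module Fqn V] [IsScalarTower Fq Fqn V]
    [FiniteDimensional Fq Fqn] [FiniteDimensional Fqn V]
    (n r k : ℕ) (hn : finrank Fq Fqn = n) (hr : finrank Fqn V = r)
    (U : Submodule Fq V) (hU : IsEvasive Fq Fqn (r - 1) k U)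
    (hk : (k : ℚ) < (r : ℚ) - 2 + (n : ℚ) / ((r : ℚ) - 1)) :
    (finrank Fq U : ℤ) ≤ (n : ℤ) + k - r + 1 := by
  classical
  obtain hr2 | hr2 := lt_or_ge r 2
  · -- degenerate cases r = 0, 1 : the hypothesis `hk` is contradictory
    exfalso
    have hk0 : (0:ℚ) ≤ (k:ℚ) := by positivity
    have hn0 : (0:ℚ) ≤ (n:ℚ) := by positivity
    interval_cases r
    · have e : ((0:ℕ):ℚ) - 1 = -1 := by norm_num
      rw [e, div_neg, div_one] at hk
      norm_num at hk
      linarith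
    · have e : ((1:ℕ):ℚ) - 1 = 0 := by norm_num
      rw [e, div_zero] at hk
      norm_num at hk
      linarith
  -- main case : r ≥ 2
  haveI : FiniteDimensional Fq V := Module.Finite.trans Fqn V
  have hq_inj : Function.Injective fun c : Fq => c • (1 : Fqn) := by
    have e : (fun c : Fq => c • (1 : Fqn)) = algebraMap Fq Fqn := by
      funext c; rw [Algebra.smul_def, mul_one]
    rw [e]
    exact (algebraMap Fq Fqn).injective
  -- Step B : r - 1 ≤ k
  have hk1 : r - 1 ≤ k := by
    obtain ⟨b, hbU, hbspan, hbli⟩ := exists_linearIndependent Fqn ((U : Set V))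
    have hbfin : b.Finite := hbli.setFinite
    haveI : Fintype b := hbfin.fintype
    have h1 : finrank Fqn (span Fqn b) = b.toFinset.card := finrank_span_set_eq_card hbli
    have hcard : r - 1 ≤ b.toFinset.card := by
      rw [← h1, hbspan]; exact hU.1
    obtain ⟨s₀, hs₀b, hs₀card⟩ := Finset.exists_subset_card_eq hcard
    have hs₀sub : (s₀ : Set V) ⊆ b := by
      intro x hx
      have := hs₀b hx
      simpa using this
    have hs₀li : LinearIndependent Fqn (fun x : (s₀ : Set V) => (x : V)) := LinearIndepOn.mono (v := id) (s := b) hbli hs₀sub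
    have hs₀liq : LinearIndependent Fq (fun x : (s₀ : Set V) => (x : V)) :=
      hs₀li.restrict_scalars hq_inj
    have hHfin : finrank Fqn (span Fqn (s₀ : Set V)) = r - 1 := by
      rw [finrank_span_finset_eq_card hs₀li, hs₀card]
    have hle : span Fq (s₀ : Set V) ≤ U ⊓ (span Fqn (s₀ : Set V)).restrictScalars Fq := by
      rw [span_le]
      intro x hx
      exact ⟨hbU (hs₀sub hx), subset_span hx⟩
    have h2 : r - 1 ≤ finrank Fq ↥(U ⊓ (span Fqn (s₀ : Set V)).restrictScalars Fq) := by
      have h3 : finrank Fq (span Fq (s₀ : Set V)) = r - 1 := by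
        rw [finrank_span_finset_eq_card hs₀liq, hs₀card]
      rw [← h3]
      exact Submodule.finrank_mono hle
    exact h2.trans (hU.2 _ hHfin)
  -- numeric consequences of hk
  have hrQ : (2:ℚ) ≤ (r:ℚ) := by exact_mod_cast hr2
  have hpos : (0:ℚ) < (r:ℚ) - 1 := by linarith
  have hkr : (r:ℚ) - 1 ≤ (k:ℚ) := by
    have e : ((r - 1 : ℕ) : ℚ) = (r:ℚ) - 1 := by
      rw [Nat.cast_sub (by omega : 1 ≤ r)]; norm_num
    rw [← e]
    exact_mod_cast hk1
  have hmain : (k:ℚ) * ((r:ℚ) - 1) < ((r:ℚ) - 2) * ((r:ℚ) - 1) + n := by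
    have h2 := mul_lt_mul_of_pos_right hk hpos
    rw [add_mul, div_mul_cancel₀ _ (ne_of_gt hpos)] at h2
    linarith
  have hnr : r ≤ n := by
    have h4 : (r:ℚ) - 1 < (n:ℚ) := by nlinarith
    have h5 : (r:ℚ) < (n:ℚ) + 1 := by linarith
    have h6 : r < n + 1 := by exact_mod_cast h5
    omega
  -- suppose for contradiction that the dimension is large
  by_contra hcon
  push_neg at hcon
  set d := finrank Fq ↥U with hd
  have hd₀le : n + k + 2 - r ≤ d := by omega
  set d₀ := n + k + 2 - r with hd₀
  -- choose U₀ ≤ U with finrank d₀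
  have hdle : d₀ ≤ finrank Fq ↥U := by rw [← hd]; omega
  obtain ⟨s, hscard, hsli⟩ := exists_finset_linearIndependent_of_le_finrank hdle
  set U₀ : Submodule Fq V := (span Fq ((s : Set ↥U))).map U.subtype with hU₀def
  have hU₀le : U₀ ≤ U := Submodule.map_subtype_le U _
  have hU₀fin : finrank Fq ↥U₀ = d₀ := by
    rw [hU₀def, Submodule.finrank_map_subtype_eq, finrank_span_finset_eq_card hsli, hscard]
  -- choose Y ≤ Fqn with finrank n + 1 - r
  have hY1 : n + 1 - r ≤ finrank Fq Fqn := by rw [hn]; omega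
  obtain ⟨sy, hsycard, hsyli⟩ := exists_finset_linearIndependent_of_le_finrank hY1
  set Y : Submodule Fq Fqn := span Fq ((sy : Set Fqn)) with hYdef
  have hYfin : finrank Fq Y = n + 1 - r := by
    rw [hYdef, finrank_span_finset_eq_card hsyli, hsycard]
  have hQfin : finrank Fq (Fqn ⧸ Y) = r - 1 := by
    have h7 := Submodule.finrank_quotient_add_finrank Y
    rw [hn] at h7
    omega
  -- the key linear map
  set Φ : Module.Dual Fqn V →ₗ[Fq] (↥U₀ →ₗ[Fq] (Fqn ⧸ Y)) :=
    { toFun := fun f => Y.mkQ ∘ₗ ((f.restrictScalars Fq) ∘ₗ U₀.subtype)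
      map_add' := by intro f g; ext x; simp
      map_smul' := by intro c f; ext x; simp } with hΦdef
  have hΦinj : Function.Injective Φ := by
    rw [← LinearMap.ker_eq_bot, LinearMap.ker_eq_bot']
    intro f hf
    by_contra hf0
    obtain ⟨x, hx⟩ : ∃ x, f x ≠ 0 := by
      by_contra h
      push_neg at h
      exact hf0 (LinearMap.ext h)
    have hsurj : Function.Surjective f := by
      intro a
      exact ⟨(a * (f x)⁻¹) • x, by
        rw [map_smul, smul_eq_mul, mul_assoc, inv_mul_cancel₀ hx, mul_one]⟩
    have hker : finrank Fqn (LinearMap.ker f) = r - 1 := by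
      have h1 := LinearMap.finrank_range_add_finrank_ker f
      rw [hr, LinearMap.range_eq_top.mpr hsurj, finrank_top, finrank_self] at h1
      omega
    have hUH : finrank Fq ↥(U ⊓ (LinearMap.ker f).restrictScalars Fq) ≤ k := hU.2 _ hker
    set g : ↥U₀ →ₗ[Fq] Fqn := (f.restrictScalars Fq) ∘ₗ U₀.subtype with hg
    have hmem : ∀ u : ↥U₀, f (u : V) ∈ Y := by
      intro u
      have h8 := LinearMap.ext_iff.mp hf u
      simpa [hΦdef, Submodule.Quotient.mk_eq_zero] using h8
    have hrange : LinearMap.range g ≤ Y := by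
      rintro y ⟨u, rfl⟩
      exact hmem u
    have h1 : finrank Fq (LinearMap.range g) ≤ n + 1 - r := by
      rw [← hYfin]
      exact Submodule.finrank_mono hrange
    have hkerle : (LinearMap.ker g).map U₀.subtype ≤
        U ⊓ (LinearMap.ker f).restrictScalars Fq := by
      rintro y ⟨u, hu, rfl⟩
      refine ⟨hU₀le u.2, ?_⟩
      simpa [hg] using hu
    have h2 : finrank Fq (LinearMap.ker g) ≤ k := by
      calc finrank Fq (LinearMap.ker g)
          = finrank Fq ((LinearMap.ker g).map U₀.subtype) :=
            (Submodule.finrank_map_subtype_eq U₀ _).symm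
        _ ≤ finrank Fq ↥(U ⊓ (LinearMap.ker f).restrictScalars Fq) :=
            Submodule.finrank_mono hkerle
        _ ≤ k := hUH
    have h3 := LinearMap.finrank_range_add_finrank_ker g
    rw [hU₀fin] at h3
    omega
  -- dimension count
  have hD : finrank Fq (Module.Dual Fqn V) = n * r := by
    have h1 : finrank Fqn (Module.Dual Fqn V) = r := by
      rw [Subspace.dual_finrank_eq, hr]
    rw [← Module.finrank_mul_finrank Fq Fqn (Module.Dual Fqn V), h1, hn]
  have hHom : finrank Fq (↥U₀ →ₗ[Fq] (Fqn ⧸ Y)) = d₀ * (r - 1) := by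
    rw [Module.finrank_linearMap, hU₀fin, hQfin]
  have hle2 : n * r ≤ d₀ * (r - 1) := by
    rw [← hD, ← hHom]
    exact LinearMap.finrank_le_finrank_of_injective hΦinj
  -- final contradiction
  have hmainZ : (k:ℤ) * ((r:ℤ) - 1) < ((r:ℤ) - 2) * ((r:ℤ) - 1) + n := by
    exact_mod_cast hmain
  have hle2' : (n:ℤ) * r ≤ ((n:ℤ) + k + 2 - r) * ((r:ℤ) - 1) := by
    have e1 : ((d₀ : ℕ) : ℤ) = (n:ℤ) + k + 2 - r := by omega
    have e2 : ((r - 1 : ℕ) : ℤ) = (r:ℤ) - 1 := by omega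
    have h := (Nat.cast_le (α := ℤ)).mpr hle2
    rw [Nat.cast_mul, Nat.cast_mul, e1, e2] at h
    exact h
  nlinarith [hmainZ, hle2']
end

section
/- If U is an (h,k)_q-evasive F_q-subspace of V = V(r,q^n), then |U| ≤ (q^k - 1)(q^{rn} - 1)/(q^{hn} - 1) + 1. -/
open Module Submodule

/-- There is a linear automorphism taking any nonzero vector to any other. -/
private lemma aux_exists_equiv {K V : Type*} [Field K] [AddCommGroup V] [Module K V]
    {v w : V} (hv : v ≠ 0) (hw : w ≠ 0) : ∃ e : V ≃ₗ[K] V, e v = w := by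
  classical
  have hv' : LinearIndepOn K id ({v} : Set V) := LinearIndepOn.singleton hv
  have hw' : LinearIndepOn K id ({w} : Set V) := LinearIndepOn.singleton hw
  let b1 := Module.Basis.extend hv'
  let b2 := Module.Basis.extend hw'
  let i0 : ↥(hv'.extend (Set.subset_univ _)) := ⟨v, hv'.subset_extend _ rfl⟩
  let j0 : ↥(hw'.extend (Set.subset_univ _)) := ⟨w, hw'.subset_extend _ rfl⟩
  let e0 := b1.indexEquiv b2
  let σ := e0.trans (Equiv.swap (e0 i0) j0)
  refine ⟨b1.equiv b2 σ, ?_⟩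
  have h1 : b1 i0 = v := Module.Basis.extend_apply_self hv' i0
  have h2 : b2 j0 = w := Module.Basis.extend_apply_self hw' j0
  have h3 : σ i0 = j0 := by simp [σ]
  calc (b1.equiv b2 σ) v = (b1.equiv b2 σ) (b1 i0) := by rw [h1]
    _ = b2 (σ i0) := b1.equiv_apply i0 b2 σ
    _ = w := by rw [h3, h2]

/-- Any subspace of dimension at most `d ≤ finrank` extends to one of dimension exactly `d`. -/
private lemma aux_superspace {K V : Type*} [Field K] [AddCommGroup V] [Module K V]
    [FiniteDimensional K V] :
    ∀ (m : ℕ) (W : Submodule K V) (d : ℕ), finrank K W + m = d → d ≤ finrank K V →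
      ∃ H : Submodule K V, W ≤ H ∧ finrank K H = d
  | 0, W, d, h1, _ => ⟨W, le_rfl, by simpa using h1⟩
  | (m+1), W, d, h1, h2 => by
    have hlt : finrank K W < finrank K V := by omega
    obtain ⟨x, hx⟩ := W.exists_of_finrank_lt hlt
    have hxW : x ∉ W := by simpa using hx 1 one_ne_zero
    have hx0 : x ≠ 0 := fun h => hxW (h ▸ W.zero_mem)
    have hinf : (K ∙ x) ⊓ W = ⊥ := by
      rw [eq_bot_iff]
      rintro y hy
      rw [Submodule.mem_inf] at hy
      obtain ⟨c, rfl⟩ := Submodule.mem_span_singleton.mp hy.1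
      rcases eq_or_ne c 0 with rfl | hc
      · simp
      · exact absurd (by simpa [hc] using W.smul_mem c⁻¹ hy.2) hxW
    have hrank : finrank K ↥((K ∙ x) ⊔ W) = finrank K W + 1 := by
      have h4 := Submodule.finrank_sup_add_finrank_inf_eq (K ∙ x) W
      rw [hinf, finrank_bot, finrank_span_singleton hx0] at h4
      omega
    obtain ⟨H, hH1, hH2⟩ := aux_superspace m ((K ∙ x) ⊔ W) d (by omega) h2
    exact ⟨H, le_trans le_sup_right hH1, hH2⟩

private lemma card_pow {K W : Type*} [Field K] [Fintype K] [AddCommGroup W] [Module K W]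
    [Module.Finite K W] : Nat.card W = Fintype.card K ^ finrank K W := by
  haveI : Finite W := Module.finite_of_finite K
  haveI := Fintype.ofFinite W
  rw [Nat.card_eq_fintype_card]
  exact card_eq_pow_finrank

/-- an `(h,k)_q`-evasive subspace `U` of `V(r,q^n)` satisfies
`|U| ≤ (q^k - 1)(q^{rn} - 1)/(q^{hn} - 1) + 1`. -/
theorem stmt14 {Fq Fqn V : Type*} [Field Fq] [Fintype Fq] [Field Fqn] [Algebra Fq Fqn]
    [AddCommGroup V] [Module Fq V] [Module Fqn V] [IsScalarTower Fq Fqn V]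
    [FiniteDimensional Fq Fqn] [FiniteDimensional Fqn V]
    (n r h k : ℕ) (hh : 0 < h) (hn : finrank Fq Fqn = n) (hr : finrank Fqn V = r)
    (U : Submodule Fq V) (hU : IsEvasive Fq Fqn h k U) :
    (Nat.card U : ℚ) ≤
      ((Fintype.card Fq : ℚ) ^ k - 1) * ((Fintype.card Fq : ℚ) ^ (r * n) - 1) /
        ((Fintype.card Fq : ℚ) ^ (h * n) - 1) + 1 := by
  classical
  haveI : Finite Fqn := Module.finite_of_finite Fq
  haveI := Fintype.ofFinite Fqn
  haveI : Module.Finite Fq V := Module.Finite.trans Fqn V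
  haveI : Finite V := Module.finite_of_finite Fq
  haveI := Fintype.ofFinite V
  haveI : Finite (Submodule Fqn V) :=
    Finite.of_injective (fun H => (H : Set V)) SetLike.coe_injective
  haveI := Fintype.ofFinite (Submodule Fqn V)
  set Q := Fintype.card Fq with hQdef
  have hQ : 2 ≤ Q := Fintype.one_lt_card
  -- n is positive
  have hn1 : 0 < n := hn ▸ Module.finrank_pos
  -- h ≤ r
  have hhr : h ≤ r := le_trans hU.1 (hr ▸ Submodule.finrank_le _)
  -- Fqn has Q^n elements
  have cFqn : Fintype.card Fqn = Q ^ n := by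
    rw [← Nat.card_eq_fintype_card, card_pow (K := Fq), hn]
  -- V has Q^(r*n) elements
  have cV : Fintype.card V = Q ^ (r * n) := by
    rw [← Nat.card_eq_fintype_card, card_pow (K := Fqn), cFqn, hr, ← pow_mul, mul_comm n r]
  -- generic: counting members of a set
  have card_mem : ∀ s : Set V, (Finset.univ.filter (fun v => v ∈ s)).card = Nat.card s := by
    intro s
    rw [Nat.card_eq_fintype_card]
    exact (Fintype.card_subtype _).symm
  have nzcard : ∀ s : Set V, (0 : V) ∈ s →
      (Finset.univ.filter (fun v => v ∈ s ∧ v ≠ 0)).card = Nat.card s - 1 := by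
    intro s h0
    have he : Finset.univ.filter (fun v => v ∈ s ∧ v ≠ 0)
        = (Finset.univ.filter (fun v => v ∈ s)).erase 0 := by
      ext v
      simp [Finset.mem_erase, and_comm]
    rw [he, Finset.card_erase_of_mem (by simp [h0]), card_mem]
  -- the collection of h-dimensional Fqn-subspaces
  set SS : Finset (Submodule Fqn V) :=
    Finset.univ.filter (fun H => finrank Fqn H = h) with hSSdef
  set M := SS.card with hMdef
  -- the double count
  have swap : ∀ T : Finset V,
      ∑ H ∈ SS, (T.filter (fun v => v ∈ H)).card
        = ∑ v ∈ T, (SS.filter (fun H => v ∈ H)).card := by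
    intro T
    simp only [Finset.card_filter]
    exact Finset.sum_comm
  -- each H in SS has Q^(h*n) elements
  have cH : ∀ H ∈ SS, Nat.card H = Q ^ (h * n) := by
    intro H hH
    rw [Finset.mem_filter] at hH
    rw [card_pow (K := Fqn), cFqn, hH.2, ← pow_mul, mul_comm n h]
  -- regularity: every nonzero vector lies in the same number of members of SS
  have reg : ∀ v w : V, v ≠ 0 → w ≠ 0 →
      (SS.filter (fun H => v ∈ H)).card = (SS.filter (fun H => w ∈ H)).card := by
    intro v w hv hw
    obtain ⟨e, he⟩ := aux_exists_equiv (K := Fqn) hv hw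
    refine Finset.card_bij' (fun H _ => Submodule.map (e : V →ₗ[Fqn] V) H)
      (fun H _ => Submodule.map (e.symm : V →ₗ[Fqn] V) H) ?_ ?_ ?_ ?_
    · intro H hH
      simp only [hSSdef, Finset.mem_filter, Finset.mem_univ, true_and] at hH ⊢
      exact ⟨by rw [LinearEquiv.finrank_map_eq e H]; exact hH.1,
        he ▸ Submodule.mem_map_of_mem hH.2⟩
    · intro H hH
      simp only [hSSdef, Finset.mem_filter, Finset.mem_univ, true_and] at hH ⊢
      refine ⟨by rw [LinearEquiv.finrank_map_eq e.symm H]; exact hH.1, ?_⟩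
      have hsv : e.symm w = v := by rw [← he, LinearEquiv.symm_apply_apply]
      exact hsv ▸ Submodule.mem_map_of_mem hH.2
    · intro H _
      ext x
      simp [Submodule.mem_map]
    · intro H _
      ext x
      simp [Submodule.mem_map]
  -- pick a base nonzero vector
  have hVnt : Nontrivial V := by
    have : 0 < finrank Fqn V := by omega
    exact Module.finrank_pos_iff.mp this
  obtain ⟨v0, hv0⟩ := exists_ne (0 : V)
  set N := (SS.filter (fun H => v0 ∈ H)).card with hNdef
  -- N is positive
  have hNpos : 0 < N := by
    obtain ⟨H0, hle, hrank⟩ := aux_superspace (h - 1) (Fqn ∙ v0) h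
      (by rw [finrank_span_singleton hv0]; omega) (by omega)
    have : H0 ∈ SS.filter (fun H => v0 ∈ H) := by
      rw [Finset.mem_filter, hSSdef, Finset.mem_filter]
      exact ⟨⟨Finset.mem_univ _, hrank⟩, hle (Submodule.mem_span_singleton_self v0)⟩
    exact Finset.card_pos.mpr ⟨H0, this⟩
  -- whole-space count : M * (Q^(h*n) - 1) = (Q^(r*n) - 1) * N
  set Wf : Finset V := Finset.univ.filter (fun v => v ≠ 0) with hWfdef
  have hWfcard : Wf.card = Q ^ (r * n) - 1 := by
    have : Wf = Finset.univ.erase 0 := by ext v; simp [hWfdef]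
    rw [this, Finset.card_erase_of_mem (Finset.mem_univ _), Finset.card_univ, cV]
  have tot : M * (Q ^ (h * n) - 1) = (Q ^ (r * n) - 1) * N := by
    have lhs : ∑ H ∈ SS, (Wf.filter (fun v => v ∈ H)).card = M * (Q ^ (h * n) - 1) := by
      rw [Finset.sum_congr rfl (fun H hH => ?_), Finset.sum_const, smul_eq_mul]
      have : Wf.filter (fun v => v ∈ H)
          = Finset.univ.filter (fun v => v ∈ (H : Set V) ∧ v ≠ 0) := by
        ext v; simp [hWfdef, Finset.mem_filter, and_comm]
      rw [this, nzcard _ H.zero_mem, show Nat.card ↥(H : Set V) = Nat.card H from rfl, cH H hH]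
    have rhs : ∑ v ∈ Wf, (SS.filter (fun H => v ∈ H)).card = (Q ^ (r * n) - 1) * N := by
      rw [Finset.sum_congr rfl (fun v hv => ?_), Finset.sum_const, smul_eq_mul, hWfcard]
      rw [hWfdef, Finset.mem_filter] at hv
      exact reg v v0 hv.2 hv0
    rw [← lhs, swap, rhs]
  -- the count over U
  set T : Finset V := Finset.univ.filter (fun v => v ∈ (U : Set V) ∧ v ≠ 0) with hTdef
  have hTcard : T.card = Nat.card U - 1 := nzcard _ U.zero_mem
  have Ucount : (Nat.card U - 1) * N ≤ M * (Q ^ k - 1) := by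
    have lhs : ∑ v ∈ T, (SS.filter (fun H => v ∈ H)).card = (Nat.card U - 1) * N := by
      rw [Finset.sum_congr rfl (fun v hv => ?_), Finset.sum_const, smul_eq_mul, hTcard]
      rw [hTdef, Finset.mem_filter] at hv
      exact reg v v0 hv.2.2 hv0
    rw [← lhs, ← swap]
    have hterm : ∀ H ∈ SS, (T.filter (fun v => v ∈ H)).card ≤ Q ^ k - 1 := by
      intro H hH
      rw [Finset.mem_filter] at hH
      have hsub : T.filter (fun v => v ∈ H) ⊆
          Finset.univ.filter (fun v => v ∈ ((U ⊓ H.restrictScalars Fq : Submodule Fq V) : Set V)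
            ∧ v ≠ 0) := by
        intro v hv
        rw [hTdef, Finset.mem_filter, Finset.mem_filter] at hv
        rw [Finset.mem_filter]
        exact ⟨Finset.mem_univ _, Submodule.mem_inf.mpr ⟨hv.1.2.1, hv.2⟩, hv.1.2.2⟩
      calc (T.filter (fun v => v ∈ H)).card
          ≤ _ := Finset.card_le_card hsub
        _ = Nat.card ↥(U ⊓ H.restrictScalars Fq) - 1 :=
            nzcard _ (U ⊓ H.restrictScalars Fq).zero_mem
        _ ≤ Q ^ k - 1 := by
            have : Nat.card ↥(U ⊓ H.restrictScalars Fq) ≤ Q ^ k := by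
              rw [card_pow (K := Fq)]
              exact Nat.pow_le_pow_right (by omega) (hU.2 H hH.2)
            omega
    calc ∑ H ∈ SS, (T.filter (fun v => v ∈ H)).card
        ≤ ∑ H ∈ SS, (Q ^ k - 1) := Finset.sum_le_sum hterm
      _ = M * (Q ^ k - 1) := by rw [Finset.sum_const, smul_eq_mul]
  -- combine into a ℕ inequality without M, N
  have key : (Nat.card U - 1) * (Q ^ (h * n) - 1) ≤ (Q ^ k - 1) * (Q ^ (r * n) - 1) := by
    have h5 : (Nat.card U - 1) * (Q ^ (h * n) - 1) * N
        ≤ (Q ^ k - 1) * (Q ^ (r * n) - 1) * N := by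
      calc (Nat.card U - 1) * (Q ^ (h * n) - 1) * N
          = (Nat.card U - 1) * N * (Q ^ (h * n) - 1) := by ring
        _ ≤ M * (Q ^ k - 1) * (Q ^ (h * n) - 1) := Nat.mul_le_mul_right _ Ucount
        _ = (Q ^ k - 1) * (M * (Q ^ (h * n) - 1)) := by ring
        _ = (Q ^ k - 1) * ((Q ^ (r * n) - 1) * N) := by rw [tot]
        _ = (Q ^ k - 1) * (Q ^ (r * n) - 1) * N := by ring
    exact Nat.le_of_mul_le_mul_right h5 hNpos
  -- pass to ℚ
  have hUpos : 1 ≤ Nat.card U := Nat.card_pos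
  have hpk : 1 ≤ Q ^ k := Nat.one_le_pow _ _ (by omega)
  have hph : 1 ≤ Q ^ (h * n) := Nat.one_le_pow _ _ (by omega)
  have hpr : 1 ≤ Q ^ (r * n) := Nat.one_le_pow _ _ (by omega)
  have hy : (0 : ℚ) < (Q : ℚ) ^ (h * n) - 1 := by
    have h6 : (1 : ℚ) < (Q : ℚ) ^ (h * n) :=
      one_lt_pow₀ (by exact_mod_cast hQ) (by positivity)
    linarith
  rw [← sub_le_iff_le_add, le_div_iff₀ hy]
  have := key
  have hcast : ((Nat.card U : ℚ) - 1) * ((Q : ℚ) ^ (h * n) - 1)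
      ≤ ((Q : ℚ) ^ k - 1) * ((Q : ℚ) ^ (r * n) - 1) := by
    have := (Nat.cast_le (α := ℚ)).mpr key
    push_cast [Nat.cast_sub hUpos, Nat.cast_sub hpk, Nat.cast_sub hph, Nat.cast_sub hpr] at this
    convert this using 2 <;> push_cast <;> ring
  exact hcast
end

section
/- If 0 < k < r - 2 + n/(r-1) and k ≥ r-1, then in V(r,q^n) there exists an (r-1,k)_q-evasive F_q-subspace of dimension n + k - r + 1, provided n ≥ r (which follows from the hypotheses). -/
open Module Submodule

section aux
variable (Fq : Type*) {Fqn V : Type*} [Field Fq] [Fintype Fq] [Field Fqn] [Algebra Fq Fqn]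
  [AddCommGroup V] [Module Fq V] [Module Fqn V] [IsScalarTower Fq Fqn V]

/-- The `Fq`-linear map `x ↦ x ^ q ^ m` on `Fqn`, where `q = |Fq|`. -/
noncomputable def frobPow (m : ℕ) : Fqn →ₗ[Fq] Fqn where
  toFun x := x ^ (Fintype.card Fq ^ m)
  map_add' x y := by
    obtain ⟨e, hp, he⟩ := FiniteField.card Fq (ringChar Fq)
    haveI : Fact (Nat.Prime (ringChar Fq)) := ⟨hp⟩
    haveI : CharP Fqn (ringChar Fq) :=
      charP_of_injective_algebraMap (algebraMap Fq Fqn).injective _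
    simp only [he, ← pow_mul]
    exact add_pow_char_pow (p := ringChar Fq) x y (↑e * m)
  map_smul' a x := by
    simp only [Algebra.smul_def, RingHom.id_apply, mul_pow, ← map_pow,
      FiniteField.pow_card_pow]

@[simp] lemma frobPow_apply (m : ℕ) (x : Fqn) :
    frobPow Fq m x = x ^ (Fintype.card Fq ^ m) := rfl

/-- The Gabidulin-type map `x ↦ ∑ i, x ^ q ^ i • b i`. -/
noncomputable def gab {r : ℕ} (b : Fin r → V) : Fqn →ₗ[Fq] V :=
  ∑ i : Fin r, ((LinearMap.toSpanSingleton Fqn V (b i)).restrictScalars Fq).comp (frobPow Fq i)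

lemma gab_apply {r : ℕ} (b : Fin r → V) (x : Fqn) :
    gab Fq b x = ∑ i : Fin r, x ^ (Fintype.card Fq ^ (i : ℕ)) • b i := by
  simp [gab, LinearMap.toSpanSingleton, LinearMap.sum_apply]

end aux

open Polynomial in
/-- A nonzero `q`-polynomial with `r` terms has kernel of `Fq`-dimension at most `r - 1`. -/
lemma qpoly_ker_bound {Fq Fqn : Type*} [Field Fq] [Fintype Fq] [Field Fqn] [Algebra Fq Fqn]
    [FiniteDimensional Fq Fqn]
    {r : ℕ} (c : Fin r → Fqn) (hc : c ≠ 0) (L : Fqn →ₗ[Fq] Fqn)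
    (hL : ∀ x, L x = ∑ i : Fin r, c i * x ^ (Fintype.card Fq ^ (i : ℕ))) :
    finrank Fq (LinearMap.ker L) ≤ r - 1 := by
  classical
  haveI : Finite Fqn := Module.finite_of_finite Fq
  haveI : Fintype Fqn := Fintype.ofFinite Fqn
  haveI : Fintype (LinearMap.ker L) := Fintype.ofFinite _
  set q := Fintype.card Fq with hqdef
  have hq : 1 < q := Fintype.one_lt_card
  obtain ⟨j, hj⟩ : ∃ j, c j ≠ 0 := by
    by_contra h; push_neg at h; exact hc (funext h)
  set P : Polynomial Fqn := ∑ i : Fin r, C (c i) * X ^ (q ^ (i : ℕ)) with hPdef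
  have hcoeff : P.coeff (q ^ (j : ℕ)) = c j := by
    rw [hPdef, finset_sum_coeff]
    rw [Finset.sum_eq_single j]
    · simp
    · intro i _ hij
      have : q ^ (j : ℕ) ≠ q ^ (i : ℕ) :=
        fun h => hij (Fin.ext (Nat.pow_right_injective hq h.symm))
      simp [coeff_C_mul, coeff_X_pow, this]
    · simp
  have hP0 : P ≠ 0 := fun h => hj (by rw [← hcoeff, h, coeff_zero])
  have hdeg : P.natDegree ≤ q ^ (r - 1) := by
    apply Polynomial.natDegree_sum_le_of_forall_le
    intro i _
    refine le_trans (natDegree_C_mul_le _ _) ?_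
    refine le_trans (natDegree_X_pow_le _) ?_
    exact Nat.pow_le_pow_right (lt_trans one_pos hq) (by omega)
  have hroot : ∀ x : LinearMap.ker L, (x : Fqn) ∈ P.roots.toFinset := by
    rintro ⟨x, hx⟩
    rw [Multiset.mem_toFinset, mem_roots hP0]
    have hxL : L x = 0 := hx
    rw [hL x] at hxL
    simp only [IsRoot.def, hPdef, eval_finset_sum, eval_mul, eval_C, eval_pow, eval_X]
    exact hxL
  have hcard : Fintype.card (LinearMap.ker L) ≤ q ^ (r - 1) := by
    have h1 : Fintype.card (LinearMap.ker L) ≤ P.roots.toFinset.card := by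
      rw [← Fintype.card_coe P.roots.toFinset]
      exact Fintype.card_le_of_injective
        (fun x : LinearMap.ker L => (⟨(x : Fqn), hroot x⟩ : P.roots.toFinset))
        (by intro a b h; exact Subtype.ext (congrArg Subtype.val h : _))
    refine le_trans h1 (le_trans (Multiset.toFinset_card_le _) ?_)
    exact le_trans (P.card_roots') hdeg
  have hcard2 : Fintype.card (LinearMap.ker L) = q ^ finrank Fq (LinearMap.ker L) :=
    card_eq_pow_finrank
  rw [hcard2] at hcard
  exact Nat.le_of_lt_succ (by
    have := (Nat.pow_le_pow_iff_right hq).mp hcard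
    omega)

/-- if `0 < k`, `r - 1 ≤ k` and `k < r - 2 + n/(r-1)` (over ℚ), then
`V(r,q^n)` contains an `(r-1,k)_q`-evasive subspace of `F_q`-dimension `n + k - r + 1`. -/
theorem stmt15 {Fq Fqn V : Type*} [Field Fq] [Fintype Fq] [Field Fqn] [Algebra Fq Fqn]
    [AddCommGroup V] [Module Fq V] [Module Fqn V] [IsScalarTower Fq Fqn V]
    [FiniteDimensional Fq Fqn] [FiniteDimensional Fqn V]
    (n r k : ℕ) (hn : finrank Fq Fqn = n) (hr : finrank Fqn V = r)
    (hk0 : 0 < k) (hk1 : r - 1 ≤ k)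
    (hk2 : (k : ℚ) < (r : ℚ) - 2 + (n : ℚ) / ((r : ℚ) - 1)) :
    ∃ U : Submodule Fq V, finrank Fq U = n + k - r + 1 ∧ IsEvasive Fq Fqn (r - 1) k U := by
  classical
  haveI : FiniteDimensional Fq V := FiniteDimensional.trans Fq Fqn V
  set q := Fintype.card Fq with hqdef
  have hq : 1 < q := Fintype.one_lt_card
  -- numeric facts
  have hr2 : 2 ≤ r := by
    by_contra h
    push_neg at h
    interval_cases r
    · push_cast at hk2
      rw [show ((0:ℚ) - 1) = -1 by norm_num, div_neg, div_one] at hk2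
      have h2 : (0:ℚ) ≤ (k:ℚ) := Nat.cast_nonneg k
      have h3 : (0:ℚ) ≤ (n:ℚ) := Nat.cast_nonneg n
      linarith
    · push_cast at hk2
      rw [show ((1:ℚ) - 1) = 0 by norm_num, div_zero] at hk2
      have h2 : (0:ℚ) ≤ (k:ℚ) := Nat.cast_nonneg k
      linarith
  have hrq : (0:ℚ) < (r:ℚ) - 1 := by
    have : (2:ℚ) ≤ (r:ℚ) := by exact_mod_cast hr2
    linarith
  have hk1' : (r:ℚ) - 1 ≤ (k:ℚ) := by
    have : ((r - 1 : ℕ) : ℚ) ≤ (k:ℚ) := by exact_mod_cast hk1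
    rwa [Nat.cast_sub (by omega), Nat.cast_one] at this
  have hrn : r ≤ n := by
    have hdiv : 1 < (n:ℚ)/((r:ℚ)-1) := by linarith
    rw [lt_div_iff₀ hrq] at hdiv
    have : (r:ℚ) < (n:ℚ) + 1 := by linarith
    exact_mod_cast Nat.lt_succ_iff.mp (by exact_mod_cast this)
  have hkn : k + 2 < r + n := by
    have hle : (n:ℚ)/((r:ℚ)-1) ≤ (n:ℚ) := by
      have h2q : (2:ℚ) ≤ (r:ℚ) := by exact_mod_cast hr2
      rw [div_le_iff₀ hrq]
      exact le_mul_of_one_le_right (Nat.cast_nonneg n) (by linarith)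
    have : (k:ℚ) + 2 < (r:ℚ) + (n:ℚ) := by linarith
    exact_mod_cast this
  set s := k + 1 - r with hsdef
  have hs_le : s ≤ n := by omega
  -- basis and the Gabidulin subspace
  let b : Basis (Fin r) Fqn V := finBasisOfFinrankEq Fqn V hr
  set f : Fqn →ₗ[Fq] V := gab Fq (fun i => b i) with hfdef
  have hfx : ∀ x : Fqn, f x = ∑ i : Fin r, x ^ (q ^ (i : ℕ)) • b i := fun x =>
    gab_apply Fq (fun i => b i) x
  have hker : LinearMap.ker f = ⊥ := by
    rw [LinearMap.ker_eq_bot']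
    intro x hx
    rw [hfx] at hx
    have h0 := Fintype.linearIndependent_iff.mp b.linearIndependent
      (fun i => x ^ (q ^ (i : ℕ))) hx ⟨0, by omega⟩
    simpa using h0
  set U₀ := LinearMap.range f with hU₀def
  have hU₀ : finrank Fq U₀ = n := by
    have h1 := LinearMap.finrank_range_add_finrank_ker f
    rw [hker, finrank_bot, hn] at h1
    rw [hU₀def]
    omega
  -- kernel bound for any nonzero functional
  have key : ∀ φ : V →ₗ[Fqn] Fqn, φ ≠ 0 →
      finrank Fq (LinearMap.ker ((φ.restrictScalars Fq).comp f)) ≤ r - 1 := by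
    intro φ hφ
    apply qpoly_ker_bound (fun i => φ (b i)) ?_ _ ?_
    · intro h0
      apply hφ
      apply b.ext
      intro i
      simpa using congrFun h0 i
    · intro x
      rw [LinearMap.comp_apply, LinearMap.restrictScalars_apply, hfx, map_sum]
      refine Finset.sum_congr rfl fun i _ => ?_
      rw [map_smul, smul_eq_mul, mul_comm]
  -- the span of U₀ is everything
  have hspan : span Fqn (U₀ : Set V) = ⊤ := by
    by_contra hne
    obtain ⟨φ, hφ0, hφmap⟩ := Submodule.exists_dual_map_eq_bot_of_lt_top
      (lt_top_iff_ne_top.mpr hne) inferInstance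
    have hzero : ∀ x : Fqn, φ (f x) = 0 := by
      intro x
      have hmem : f x ∈ span Fqn (U₀ : Set V) := subset_span ⟨x, rfl⟩
      have h2 : φ (f x) ∈ (span Fqn (U₀ : Set V)).map φ := Submodule.mem_map_of_mem hmem
      rwa [hφmap, Submodule.mem_bot] at h2
    have hkert : LinearMap.ker ((φ.restrictScalars Fq).comp f) = ⊤ := by
      rw [LinearMap.ker_eq_top]
      ext x
      exact hzero x
    have hb := key φ hφ0
    rw [hkert, finrank_top, hn] at hb
    omega
  -- the extra subspace S
  let c : Basis (Fin n) Fq Fqn := finBasisOfFinrankEq Fq Fqn hn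
  have hli : LinearIndependent Fq (fun i : Fin s => c (Fin.castLE hs_le i)) :=
    c.linearIndependent.comp _ (Fin.castLE_injective hs_le)
  set T := span Fq (Set.range fun i : Fin s => c (Fin.castLE hs_le i)) with hTdef
  have hT : finrank Fq T = s := by
    rw [hTdef, finrank_span_eq_card hli, Fintype.card_fin]
  let i0 : Fin r := ⟨0, by omega⟩
  let μ : Fqn →ₗ[Fq] V := (LinearMap.toSpanSingleton Fqn V (b i0)).restrictScalars Fq
  have hμapp : ∀ x : Fqn, μ x = x • b i0 := fun x => rfl
  have hμinj : Function.Injective μ := by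
    intro x y hxy
    have h1 : (x - y) • b i0 = 0 := by
      rw [sub_smul, ← hμapp, ← hμapp, hxy, sub_self]
    rcases smul_eq_zero.mp h1 with h | h
    · exact sub_eq_zero.mp h
    · exact absurd h (b.ne_zero i0)
  set S := T.map μ with hSdef
  have hS : finrank Fq S = s := by
    rw [← hT, hSdef]
    exact (LinearEquiv.finrank_eq (Submodule.equivMapOfInjective μ hμinj T)).symm
  -- disjointness of U₀ and S
  have hdis : U₀ ⊓ S = ⊥ := by
    rw [eq_bot_iff]
    intro v hv
    obtain ⟨hv1, hv2⟩ := hv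
    obtain ⟨x, hx⟩ := hv1
    obtain ⟨y, hyT, hy⟩ := Submodule.mem_map.mp hv2
    have heq : ∑ i : Fin r, x ^ (q ^ (i : ℕ)) • b i = y • b i0 := by
      rw [← hfx, hx, ← hy, hμapp]
    have hzero : ∑ i : Fin r, (x ^ (q ^ (i : ℕ)) - if i = i0 then y else 0) • b i = 0 := by
      simp only [sub_smul, Finset.sum_sub_distrib, heq]
      simp [Finset.sum_ite_eq']
    have h1 := Fintype.linearIndependent_iff.mp b.linearIndependent _ hzero ⟨1, by omega⟩
    have hi1 : (⟨1, by omega⟩ : Fin r) ≠ i0 := by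
      simp [i0, Fin.ext_iff]
    rw [if_neg hi1, sub_zero] at h1
    have hx0 : x = 0 :=
      pow_eq_zero_iff (pow_ne_zero _ (by omega : q ≠ 0)) |>.mp h1
    rw [Submodule.mem_bot, ← hx, hx0, map_zero]
  -- the subspace U
  set U : Submodule Fq V := U₀ ⊔ S with hUdef
  have hUr : finrank Fq U = n + s := by
    have h1 := Submodule.finrank_sup_add_finrank_inf_eq U₀ S
    rw [hdis, finrank_bot, hU₀, hS] at h1
    rw [hUdef]
    omega
  refine ⟨U, ?_, ?_, ?_⟩
  · rw [hUr]; omega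
  · -- span condition
    have hsub : (U₀ : Set V) ⊆ (U : Set V) := fun x hx => Submodule.mem_sup_left hx
    have htop : span Fqn (U : Set V) = ⊤ :=
      top_unique (hspan ▸ span_mono hsub)
    rw [htop, finrank_top, hr]
    omega
  · -- intersection condition
    intro H hH
    have hHne : H ≠ ⊤ := by
      intro h
      rw [h, finrank_top, hr] at hH
      omega
    obtain ⟨φ, hφ0, hφmap⟩ := Submodule.exists_dual_map_eq_bot_of_lt_top
      (lt_top_iff_ne_top.mpr hHne) inferInstance
    have hHker : ∀ x ∈ H, φ x = 0 := fun x hx => by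
      have h2 : φ x ∈ H.map φ := Submodule.mem_map_of_mem hx
      rwa [hφmap, Submodule.mem_bot] at h2
    set g := (φ.restrictScalars Fq).comp U.subtype with hgdef
    have hinf : U ⊓ H.restrictScalars Fq ≤ U ⊓ LinearMap.ker (φ.restrictScalars Fq) :=
      inf_le_inf_left _ (fun x hx => LinearMap.mem_ker.mpr (hHker x hx))
    have hmapker : Submodule.map U.subtype (LinearMap.ker g) =
        U ⊓ LinearMap.ker (φ.restrictScalars Fq) := by
      rw [hgdef, LinearMap.ker_comp, Submodule.map_comap_subtype]
    have hfin1 : finrank Fq ↥(U ⊓ H.restrictScalars Fq) ≤ finrank Fq (LinearMap.ker g) := by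
      refine le_trans (Submodule.finrank_mono hinf) ?_
      rw [← hmapker]
      exact le_of_eq (Submodule.finrank_map_subtype_eq _ _)
    have hg := LinearMap.finrank_range_add_finrank_ker g
    rw [hUr] at hg
    set L := (φ.restrictScalars Fq).comp f with hLdef
    have hrangeL : LinearMap.range L ≤ LinearMap.range g := by
      rintro y ⟨x, rfl⟩
      exact ⟨⟨f x, Submodule.mem_sup_left (LinearMap.mem_range_self f x)⟩, rfl⟩
    have hrankL : n - (r - 1) ≤ finrank Fq (LinearMap.range L) := by
      have h1 := LinearMap.finrank_range_add_finrank_ker L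
      have h2 := key φ hφ0
      rw [← hLdef] at h2
      rw [hn] at h1
      omega
    have hrg : finrank Fq (LinearMap.range L) ≤ finrank Fq (LinearMap.range g) :=
      Submodule.finrank_mono hrangeL
    have hkerg : finrank Fq (LinearMap.ker g) ≤ s + (r - 1) := by omega
    refine le_trans hfin1 (le_trans hkerg ?_)
    omega
end

section
/- Let U be a d_1-dimensional (h_1,k_1)_q-evasive F_q-subspace of V = V(r,q^n), and suppose there exists a d_2-dimensional (h_1 - 1, k_2)_q-evasive F_q-subspace W in V(h_1, q^n) with d_2 + h_1 - k_2 - 1 > k_1. Then d_1 ≤ rn - rn·h_1/d_2. -/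
open Module Submodule

lemma extend_lemma {Fq Fqn V : Type*} [Field Fq] [Field Fqn] [Algebra Fq Fqn]
    [AddCommGroup V] [Module Fq V] [Module Fqn V] [IsScalarTower Fq Fqn V]
    [FiniteDimensional Fq V] [FiniteDimensional Fqn V]
    (U : Submodule Fq V) (s : ℕ) :
    ∀ K : Submodule Fqn V, finrank Fqn ↥K + s ≤ finrank Fqn ↥(span Fqn (U : Set V)) →
    ∃ K' : Submodule Fqn V, K ≤ K' ∧ finrank Fqn ↥K' = finrank Fqn ↥K + s ∧
      finrank Fq ↥(U ⊓ K.restrictScalars Fq) + s ≤ finrank Fq ↥(U ⊓ K'.restrictScalars Fq) := by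
  induction s with
  | zero => intro K _; exact ⟨K, le_rfl, by simp, by simp⟩
  | succ s ih =>
    intro K hK
    have hw : ∃ w ∈ U, w ∉ K := by
      by_contra h
      push_neg at h
      have hle : span Fqn (U : Set V) ≤ K := span_le.mpr (fun x hx => h x hx)
      have := Submodule.finrank_mono hle
      omega
    obtain ⟨w, hwU, hwK⟩ := hw
    have hw0 : w ≠ 0 := fun h => hwK (h ▸ K.zero_mem)
    set K₁ : Submodule Fqn V := K ⊔ span Fqn {w} with hK₁def
    have hinf : K ⊓ span Fqn {w} = ⊥ := by
      rw [eq_bot_iff]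
      intro x hx
      obtain ⟨hxK, hxw⟩ := Submodule.mem_inf.mp hx
      rw [Submodule.mem_span_singleton] at hxw
      obtain ⟨c, rfl⟩ := hxw
      rcases eq_or_ne c 0 with rfl | hc
      · simp
      · exact absurd (by simpa [smul_smul, inv_mul_cancel₀ hc] using K.smul_mem c⁻¹ hxK) hwK
    have hfK₁ : finrank Fqn ↥K₁ = finrank Fqn ↥K + 1 := by
      have := Submodule.finrank_sup_add_finrank_inf_eq K (span Fqn {w})
      rw [hinf, finrank_span_singleton hw0] at this
      simpa using this
    have hwK₁ : w ∈ K₁ := (le_sup_right : span Fqn {w} ≤ K₁) (Submodule.mem_span_singleton_self w)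
    have hKK₁ : K ≤ K₁ := le_sup_left
    have hint : finrank Fq ↥(U ⊓ K.restrictScalars Fq) + 1 ≤
        finrank Fq ↥(U ⊓ K₁.restrictScalars Fq) := by
      have hlt : U ⊓ K.restrictScalars Fq < U ⊓ K₁.restrictScalars Fq := by
        refine lt_of_le_of_ne (inf_le_inf_left _ (fun x hx => hKK₁ hx)) (fun h => hwK ?_)
        have : w ∈ U ⊓ K₁.restrictScalars Fq := ⟨hwU, hwK₁⟩
        rw [← h] at this
        exact this.2
      exact Submodule.finrank_lt_finrank_of_lt hlt
    obtain ⟨K', hK₁K', hfK', hintK'⟩ := ih K₁ (by omega)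
    exact ⟨K', hKK₁.trans hK₁K', by omega, by omega⟩

/-- if `U` is a `d₁`-dimensional `(h₁,k₁)_q`-evasive subspace of `V(r,q^n)`
and there is a `d₂`-dimensional `(h₁-1,k₂)_q`-evasive subspace `W` in `V(h₁,q^n)` with
`d₂ + h₁ - k₂ - 1 > k₁`, then `d₁ ≤ rn - rn·h₁/d₂` (over the rationals). -/
theorem stmt18 {Fq Fqn V V₂ : Type*} [Field Fq] [Fintype Fq] [Field Fqn] [Algebra Fq Fqn]
    [AddCommGroup V] [Module Fq V] [Module Fqn V] [IsScalarTower Fq Fqn V]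
    [AddCommGroup V₂] [Module Fq V₂] [Module Fqn V₂] [IsScalarTower Fq Fqn V₂]
    [FiniteDimensional Fq Fqn] [FiniteDimensional Fqn V] [FiniteDimensional Fqn V₂]
    (n r h₁ k₁ k₂ d₁ d₂ : ℕ) (hn : finrank Fq Fqn = n)
    (hr : finrank Fqn V = r) (hV₂ : finrank Fqn V₂ = h₁)
    (U : Submodule Fq V) (hU : IsEvasive Fq Fqn h₁ k₁ U) (hd₁ : finrank Fq U = d₁)
    (W : Submodule Fq V₂) (hW : IsEvasive Fq Fqn (h₁ - 1) k₂ W) (hd₂ : finrank Fq W = d₂)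
    (hineq : (k₁ : ℤ) < (d₂ : ℤ) + h₁ - k₂ - 1) :
    (d₁ : ℚ) ≤ (r : ℚ) * n - (r : ℚ) * n * h₁ / d₂ := by
  haveI : FiniteDimensional Fq V := FiniteDimensional.trans Fq Fqn V
  haveI : FiniteDimensional Fq V₂ := FiniteDimensional.trans Fq Fqn V₂
  have hfV : finrank Fq V = n * r := by
    rw [← Module.finrank_mul_finrank Fq Fqn V, hn, hr]
  have hd₁nr : d₁ ≤ n * r := by
    rw [← hd₁, ← hfV]; exact U.finrank_le
  -- trivial cases
  rcases Nat.eq_zero_or_pos h₁ with rfl | hh₁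
  · simp only [Nat.cast_zero, mul_zero, zero_div, sub_zero]
    calc (d₁ : ℚ) ≤ ((n * r : ℕ) : ℚ) := by exact_mod_cast hd₁nr
    _ = (r : ℚ) * n := by push_cast; ring
  rcases Nat.eq_zero_or_pos d₂ with rfl | hd₂pos
  · simp only [Nat.cast_zero, div_zero, sub_zero]
    calc (d₁ : ℚ) ≤ ((n * r : ℕ) : ℚ) := by exact_mod_cast hd₁nr
    _ = (r : ℚ) * n := by push_cast; ring
  by_contra hcon
  push_neg at hcon
  -- numeric: d₂ * (n*r - d₁) < (n*r) * h₁
  have key : d₂ * (n * r - d₁) < n * r * h₁ := by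
    have hd₂Q : (0 : ℚ) < (d₂ : ℚ) := by exact_mod_cast hd₂pos
    have h1 : (r : ℚ) * n * (d₂ : ℚ) - (r : ℚ) * n * h₁ < (d₁ : ℚ) * d₂ := by
      have := (sub_lt_iff_lt_add).mp hcon
      nlinarith [hcon, hd₂Q, mul_lt_mul_of_pos_right hcon hd₂Q,
        (div_mul_cancel₀ ((r : ℚ) * n * h₁) (ne_of_gt hd₂Q))]
    have h2 : ((d₂ * (n * r - d₁) : ℕ) : ℚ) < ((n * r * h₁ : ℕ) : ℚ) := by
      push_cast [Nat.cast_sub hd₁nr]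
      nlinarith [h1]
    exact_mod_cast h2
  -- construct φ
  let e : Basis (Fin h₁) Fqn V₂ := Module.finBasisOfFinrankEq Fqn V₂ hV₂
  let Θ : (Fin h₁ → V) →ₗ[Fq] (↥W →ₗ[Fq] V ⧸ U) :=
    (LinearMap.llcomp Fq ↥W V (V ⧸ U) U.mkQ) ∘ₗ (LinearMap.lcomp Fq V W.subtype) ∘ₗ
      (LinearMap.restrictScalarsₗ (R := Fq) (S := Fqn) (M := V₂) (N := V) (R₁ := Fq)) ∘ₗ
      (e.constr Fq).toLinearMap
  have hdom : finrank Fq (Fin h₁ → V) = h₁ * (n * r) := by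
    rw [Module.finrank_pi_fintype]
    simp [hfV, Finset.sum_const, mul_comm]
  have hquot : finrank Fq (V ⧸ U) = n * r - d₁ := by
    have := U.finrank_quotient_add_finrank
    omega
  have hcod : finrank Fq (↥W →ₗ[Fq] V ⧸ U) = d₂ * (n * r - d₁) := by
    rw [Module.finrank_linearMap, hd₂, hquot]
  have hker : ∃ v : Fin h₁ → V, v ≠ 0 ∧ Θ v = 0 := by
    by_contra h
    push_neg at h
    have hinj : Function.Injective Θ := by
      rw [← LinearMap.ker_eq_bot, eq_bot_iff]
      intro v hv
      rcases eq_or_ne v 0 with rfl | hv0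
      · simp
      · exact absurd (LinearMap.mem_ker.mp hv) (h v hv0)
    have := LinearMap.finrank_le_finrank_of_injective hinj
    rw [hdom, hcod] at this
    rw [mul_comm (n * r) h₁] at key
    exact absurd (lt_of_lt_of_le key this) (lt_irrefl _)
  obtain ⟨v, hv0, hΘv⟩ := hker
  set φ : V₂ →ₗ[Fqn] V := e.constr Fq v with hφdef
  have hφ0 : φ ≠ 0 := by
    intro h
    apply hv0
    funext i
    have : φ (e i) = v i := e.constr_basis Fq v i
    rw [h] at this
    simpa using this.symm
  have hφU : ∀ w ∈ W, φ w ∈ U := by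
    intro w hw
    have h2 : Θ v ⟨w, hw⟩ = 0 := by rw [hΘv]; rfl
    have h3 : U.mkQ (φ w) = 0 := h2
    rwa [Submodule.mkQ_apply, Submodule.Quotient.mk_eq_zero] at h3
  set t := finrank Fqn ↥(LinearMap.range φ) with htdef
  have hrn : t + finrank Fqn ↥(LinearMap.ker φ) = h₁ := by
    rw [htdef, LinearMap.finrank_range_add_finrank_ker, hV₂]
  have ht1 : 1 ≤ t := by
    rcases Nat.eq_zero_or_pos t with h0 | h
    · exfalso
      apply hφ0
      have : LinearMap.range φ = ⊥ := Submodule.finrank_eq_zero.mp h0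
      exact LinearMap.range_eq_bot.mp this
    · exact h
  have hth₁ : t ≤ h₁ := by omega
  -- W-side: finrank (W ⊓ ker φ) bounded
  obtain ⟨K', hKK', hfK', hintK'⟩ := extend_lemma W (t - 1) (LinearMap.ker φ)
    (by have := hW.1; omega)
  have hK'k₂ : finrank Fq ↥(W ⊓ K'.restrictScalars Fq) ≤ k₂ := hW.2 K' (by omega)
  set a := finrank Fq ↥(W ⊓ (LinearMap.ker φ).restrictScalars Fq) with hadef
  have hak₂ : a + (t - 1) ≤ k₂ := le_trans hintK' hK'k₂
  -- U-side
  obtain ⟨H', hHH', hfH', hintH'⟩ := extend_lemma U (h₁ - t) (LinearMap.range φ)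
    (by have := hU.1; omega)
  have hH'k₁ : finrank Fq ↥(U ⊓ H'.restrictScalars Fq) ≤ k₁ := hU.2 H' (by omega)
  -- b + a = d₂ via rank-nullity of φ restricted to W
  set f : ↥W →ₗ[Fq] V := (φ.restrictScalars Fq) ∘ₗ W.subtype with hfdef
  set b := finrank Fq ↥(LinearMap.range f) with hbdef
  have hba : b + a = d₂ := by
    have h1 := LinearMap.finrank_range_add_finrank_ker f
    have h2 : finrank Fq ↥(LinearMap.ker f) = a := by
      have hk : LinearMap.ker f = comap W.subtype
          (W ⊓ (LinearMap.ker φ).restrictScalars Fq) := by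
        ext x
        simp [hfdef, LinearMap.mem_ker, Submodule.mem_comap, x.2]
      rw [hk]
      exact LinearEquiv.finrank_eq (Submodule.comapSubtypeEquivOfLe inf_le_left)
    rw [h2] at h1
    rw [hbdef]
    omega
  have hbU : b ≤ finrank Fq ↥(U ⊓ (LinearMap.range φ).restrictScalars Fq) := by
    apply Submodule.finrank_mono
    rintro x ⟨w, rfl⟩
    exact ⟨hφU w w.2, ⟨w, rfl⟩⟩
  -- final contradiction
  omega
end

section
/- If k < n and U is an (h,k)_q-evasive F_q-subspace of V(r,q^n), then dim_q U ≤ rn - rnh/(k+1). -/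
open Module Submodule

section Helpers

section Chain

variable {Fq Fqn V : Type*} [Field Fq] [Field Fqn] [Algebra Fq Fqn]
    [AddCommGroup V] [Module Fq V] [Module Fqn V] [IsScalarTower Fq Fqn V]
    [FiniteDimensional Fq Fqn] [FiniteDimensional Fqn V]

/-- Chain extension lemma: an `Fqn`-subspace `S` can be enlarged by `d` dimensions, gaining at
least `d` dimensions of intersection with a given `Fq`-subspace `A`, provided the `Fqn`-span of
`A` is large enough. -/
lemma chain_lemma (A : Submodule Fq V) (d : ℕ) :
    ∀ S : Submodule Fqn V, finrank Fqn S + d ≤ finrank Fqn (span Fqn (A : Set V)) →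
    ∃ T : Submodule Fqn V, S ≤ T ∧ finrank Fqn T = finrank Fqn S + d ∧
      finrank Fq ↥(A ⊓ S.restrictScalars Fq) + d ≤ finrank Fq ↥(A ⊓ T.restrictScalars Fq) := by
  haveI : FiniteDimensional Fq V := FiniteDimensional.trans Fq Fqn V
  induction d with
  | zero => exact fun S _ => ⟨S, le_rfl, by omega, by omega⟩
  | succ d ih =>
    intro S hS
    have hAS : ¬ ((A : Set V) ⊆ (S.restrictScalars Fq : Set V)) := by
      intro hsub
      have h1 : span Fqn (A : Set V) ≤ S := span_le.mpr hsub
      have h2 := Submodule.finrank_mono h1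
      omega
    obtain ⟨a, haA, haS⟩ := Set.not_subset.mp hAS
    have haS' : a ∉ S := haS
    have ha0 : a ≠ 0 := fun hh => haS' (hh ▸ S.zero_mem)
    set S' := S ⊔ (Fqn ∙ a) with hS'def
    have hamem : a ∈ S' := Submodule.mem_sup_right (Submodule.mem_span_singleton_self a)
    have hlt : S < S' := lt_of_le_of_ne le_sup_left (fun hh => haS' (hh ▸ hamem))
    have h1 : finrank Fqn S < finrank Fqn S' := Submodule.finrank_lt_finrank_of_lt hlt
    have h2 := Submodule.finrank_sup_add_finrank_inf_eq S (Fqn ∙ a)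
    rw [← hS'def] at h2
    have h3 : finrank Fqn ↥(Fqn ∙ a) = 1 := finrank_span_singleton ha0
    have hS'rank : finrank Fqn S' = finrank Fqn S + 1 := by omega
    have hltq : A ⊓ S.restrictScalars Fq < A ⊓ S'.restrictScalars Fq := by
      refine lt_of_le_of_ne (inf_le_inf_left _ (fun x hx => hlt.le hx)) (fun hh => ?_)
      have : a ∈ A ⊓ S'.restrictScalars Fq := ⟨haA, hamem⟩
      rw [← hh] at this
      exact haS' this.2
    have h4 : finrank Fq ↥(A ⊓ S.restrictScalars Fq) < finrank Fq ↥(A ⊓ S'.restrictScalars Fq) :=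
      Submodule.finrank_lt_finrank_of_lt hltq
    obtain ⟨T, hT1, hT2, hT3⟩ := ih S' (by omega)
    exact ⟨T, le_trans hlt.le hT1, by omega, by omega⟩

end Chain

section Frob

variable (Fq Fqn : Type*) [Field Fq] [Fintype Fq] [Field Fqn] [Algebra Fq Fqn]

lemma charfacts : ∃ p eexp : ℕ, p.Prime ∧ Fintype.card Fq = p ^ eexp ∧ CharP Fqn p := by
  haveI : CharP Fq (ringChar Fq) := ringChar.charP Fq
  haveI hch : CharP Fqn (ringChar Fq) :=
    charP_of_injective_algebraMap (algebraMap Fq Fqn).injective (ringChar Fq)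
  have hp : (ringChar Fq).Prime := CharP.char_is_prime Fq (ringChar Fq)
  haveI : Fact (ringChar Fq).Prime := ⟨hp⟩
  obtain ⟨nn, -, hcard⟩ := FiniteField.card Fq (ringChar Fq)
  exact ⟨ringChar Fq, nn, hp, hcard, hch⟩

/-- The `Fq`-linear Frobenius map `x ↦ x ^ |Fq|` on `Fqn`. -/
noncomputable def frobQ : Fqn →ₗ[Fq] Fqn where
  toFun x := x ^ Fintype.card Fq
  map_add' x y := by
    obtain ⟨p, eexp, hp, hcard, hch⟩ := charfacts Fq Fqn
    haveI := hch
    haveI : Fact p.Prime := ⟨hp⟩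
    rw [hcard]
    exact add_pow_char_pow x y p eexp
  map_smul' c x := by
    simp only [RingHom.id_apply, Algebra.smul_def, mul_pow, ← map_pow, FiniteField.pow_card]

lemma frobQ_pow_apply (i : ℕ) (x : Fqn) :
    ((frobQ Fq Fqn ^ i : Module.End Fq Fqn)) x = x ^ (Fintype.card Fq) ^ i := by
  induction i generalizing x with
  | zero => simp
  | succ i ih =>
    rw [pow_succ, Module.End.mul_apply]
    show (frobQ Fq Fqn ^ i) (x ^ Fintype.card Fq) = _
    rw [ih, ← pow_mul, pow_succ, mul_comm (Fintype.card Fq ^ i)]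

/-- The linearized ("q-polynomial") map `x ↦ ∑ aᵢ x^(Q^i)`. -/
noncomputable def Lmap {h : ℕ} (a : Fin h → Fqn) : Fqn →ₗ[Fq] Fqn :=
  ∑ i : Fin h, a i • ((frobQ Fq Fqn ^ (i : ℕ) : Module.End Fq Fqn) : Fqn →ₗ[Fq] Fqn)

lemma Lmap_apply {h : ℕ} (a : Fin h → Fqn) (x : Fqn) :
    Lmap Fq Fqn a x = ∑ i : Fin h, a i * x ^ (Fintype.card Fq) ^ (i : ℕ) := by
  simp only [Lmap, LinearMap.sum_apply, LinearMap.smul_apply, smul_eq_mul]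
  exact Finset.sum_congr rfl fun i _ => by rw [frobQ_pow_apply]

variable [FiniteDimensional Fq Fqn]

/-- A nonzero linearized polynomial of `Q`-degree at most `h-1` has kernel of dimension
at most `h-1`. -/
lemma finrank_ker_Lmap {h : ℕ} (a : Fin h → Fqn) (ha : a ≠ 0) :
    finrank Fq ↥(LinearMap.ker (Lmap Fq Fqn a)) ≤ h - 1 := by
  classical
  haveI : Finite Fqn := Module.finite_of_finite Fq
  haveI : Fintype Fqn := Fintype.ofFinite Fqn
  obtain ⟨i₀, hi₀⟩ : ∃ i, a i ≠ 0 := by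
    by_contra hcon; push_neg at hcon; exact ha (funext hcon)
  have hQ : 1 < Fintype.card Fq := Fintype.one_lt_card
  set Q := Fintype.card Fq with hQdef
  set P : Polynomial Fqn := ∑ i : Fin h, Polynomial.C (a i) * Polynomial.X ^ (Q ^ (i : ℕ))
    with hPdef
  have hcoeff : P.coeff (Q ^ (i₀ : ℕ)) = a i₀ := by
    rw [hPdef, Polynomial.finset_sum_coeff]
    rw [Finset.sum_eq_single i₀]
    · simp
    · intro b _ hb
      have hne : Q ^ (b : ℕ) ≠ Q ^ (i₀ : ℕ) := fun hc =>
        hb (Fin.ext (Nat.pow_right_injective hQ hc))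
      simp [Polynomial.coeff_C_mul, Polynomial.coeff_X_pow, Ne.symm hne]
    · simp
  have hPne : P ≠ 0 := fun hc => hi₀ (by rw [← hcoeff, hc, Polynomial.coeff_zero])
  have hdeg : P.natDegree ≤ Q ^ (h - 1) := by
    rw [hPdef]
    refine Polynomial.natDegree_sum_le_of_forall_le _ _ fun i _ => ?_
    refine le_trans (Polynomial.natDegree_C_mul_le _ _) ?_
    rw [Polynomial.natDegree_X_pow]
    exact Nat.pow_le_pow_right (le_of_lt hQ) (by omega)
  have hroot : ∀ x ∈ LinearMap.ker (Lmap Fq Fqn a), P.IsRoot x := by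
    intro x hx
    have hx' : Lmap Fq Fqn a x = 0 := hx
    rw [Lmap_apply] at hx'
    rw [Polynomial.IsRoot, hPdef, Polynomial.eval_finset_sum]
    simpa using hx'
  have hcard : Fintype.card ↥(LinearMap.ker (Lmap Fq Fqn a)) ≤ Q ^ (h - 1) := by
    have hsub : (LinearMap.ker (Lmap Fq Fqn a) : Set Fqn).toFinset ⊆ P.roots.toFinset := by
      intro x hx
      rw [Set.mem_toFinset] at hx
      rw [Multiset.mem_toFinset, Polynomial.mem_roots hPne]
      exact hroot x hx
    calc Fintype.card ↥(LinearMap.ker (Lmap Fq Fqn a))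
        = (LinearMap.ker (Lmap Fq Fqn a) : Set Fqn).toFinset.card := (Set.toFinset_card _).symm
      _ ≤ P.roots.toFinset.card := Finset.card_le_card hsub
      _ ≤ Multiset.card P.roots := Multiset.toFinset_card_le _
      _ ≤ P.natDegree := Polynomial.card_roots' P
      _ ≤ Q ^ (h - 1) := hdeg
  have hcard2 : Fintype.card ↥(LinearMap.ker (Lmap Fq Fqn a))
      = Q ^ (finrank Fq ↥(LinearMap.ker (Lmap Fq Fqn a))) := card_eq_pow_finrank
  rw [hcard2] at hcard
  exact (Nat.pow_le_pow_iff_right hQ).mp hcard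

/-- The Gabidulin-type embedding `x ↦ (x, x^Q, x^(Q²), …)`. -/
noncomputable def gmap (h : ℕ) : Fqn →ₗ[Fq] (Fin h → Fqn) :=
  LinearMap.pi fun i => ((frobQ Fq Fqn ^ (i : ℕ) : Module.End Fq Fqn) : Fqn →ₗ[Fq] Fqn)

lemma gmap_apply (h : ℕ) (x : Fqn) (i : Fin h) :
    gmap Fq Fqn h x i = x ^ (Fintype.card Fq) ^ (i : ℕ) := by
  rw [gmap, LinearMap.pi_apply, frobQ_pow_apply]

lemma gmap_injective {h : ℕ} (hh : 1 ≤ h) : Function.Injective (gmap Fq Fqn h) := by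
  intro x y hxy
  have h0 : gmap Fq Fqn h x ⟨0, hh⟩ = gmap Fq Fqn h y ⟨0, hh⟩ := by rw [hxy]
  rwa [gmap_apply, gmap_apply, pow_zero, pow_one, pow_one] at h0

/-- For a functional `f` on `Fqn^h` and `x ∈ Fqn`, `f (gmap x)` is a linearized polynomial
evaluated at `x`. -/
lemma f_gmap {h : ℕ} (f : (Fin h → Fqn) →ₗ[Fqn] Fqn) (x : Fqn) :
    f (gmap Fq Fqn h x) =
      Lmap Fq Fqn (fun i => f fun j => if i = j then 1 else 0) x := by
  classical
  rw [LinearMap.pi_apply_eq_sum_univ f (gmap Fq Fqn h x), Lmap_apply]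
  exact Finset.sum_congr rfl fun i _ => by
    rw [gmap_apply, smul_eq_mul, mul_comm]

/-- The image `W` of an `Fq`-subspace of `Fqn` under `gmap` meets every proper `Fqn`-subspace
of `Fqn^h` in `Fq`-dimension at most `h - 1`. -/
lemma W_inf_bound {h : ℕ} (Ssub : Submodule Fq Fqn)
    (T : Submodule Fqn (Fin h → Fqn)) (hT : T ≠ ⊤) :
    finrank Fq ↥((Ssub.map (gmap Fq Fqn h)) ⊓ T.restrictScalars Fq) ≤ h - 1 := by
  classical
  obtain ⟨f, hf0, hfT⟩ := Submodule.exists_dual_map_eq_bot_of_lt_top hT.lt_top inferInstance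
  set a : Fin h → Fqn := fun i => f fun j => if i = j then 1 else 0 with hadef
  have ha : a ≠ 0 := by
    intro hc
    apply hf0
    refine LinearMap.ext fun x => ?_
    rw [LinearMap.pi_apply_eq_sum_univ f x]
    simp only [LinearMap.zero_apply]
    refine Finset.sum_eq_zero fun i _ => ?_
    have : a i = 0 := by rw [hc]; rfl
    rw [hadef] at this
    simp only at this
    rw [this, smul_zero]
  have hsub : (Ssub.map (gmap Fq Fqn h)) ⊓ T.restrictScalars Fq ≤
      (LinearMap.ker (Lmap Fq Fqn a)).map (gmap Fq Fqn h) := by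
    rintro w ⟨⟨x, hxS, rfl⟩, hwT⟩
    refine ⟨x, ?_, rfl⟩
    have hfw : f (gmap Fq Fqn h x) = 0 := by
      have : f (gmap Fq Fqn h x) ∈ T.map f := ⟨_, hwT, rfl⟩
      rw [hfT] at this
      exact (Submodule.mem_bot Fqn).mp this
    rw [f_gmap] at hfw
    exact hfw
  calc finrank Fq ↥((Ssub.map (gmap Fq Fqn h)) ⊓ T.restrictScalars Fq)
      ≤ finrank Fq ↥((LinearMap.ker (Lmap Fq Fqn a)).map (gmap Fq Fqn h)) :=
        Submodule.finrank_mono hsub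
    _ ≤ finrank Fq ↥(LinearMap.ker (Lmap Fq Fqn a)) := Submodule.finrank_map_le _ _
    _ ≤ h - 1 := finrank_ker_Lmap Fq Fqn a ha

/-- If `dim_Fq S = k + 1 > h - 1`, then `gmap(S)` spans `Fqn^h` over `Fqn`. -/
lemma span_W_top {h k : ℕ} (hhk : h ≤ k + 1) (Ssub : Submodule Fq Fqn)
    (hS : finrank Fq ↥Ssub = k + 1) :
    span Fqn ((Ssub.map (gmap Fq Fqn h) : Submodule Fq (Fin h → Fqn)) : Set (Fin h → Fqn)) = ⊤ := by
  classical
  by_contra hcon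
  obtain ⟨f, hf0, hfT⟩ :=
    Submodule.exists_dual_map_eq_bot_of_lt_top (Ne.lt_top hcon) inferInstance
  set a : Fin h → Fqn := fun i => f fun j => if i = j then 1 else 0 with hadef
  have ha : a ≠ 0 := by
    intro hc
    apply hf0
    refine LinearMap.ext fun x => ?_
    rw [LinearMap.pi_apply_eq_sum_univ f x]
    simp only [LinearMap.zero_apply]
    refine Finset.sum_eq_zero fun i _ => ?_
    have : a i = 0 := by rw [hc]; rfl
    rw [hadef] at this
    simp only at this
    rw [this, smul_zero]
  have hSker : Ssub ≤ LinearMap.ker (Lmap Fq Fqn a) := by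
    intro x hx
    have hw : gmap Fq Fqn h x ∈ span Fqn
        ((Ssub.map (gmap Fq Fqn h) : Submodule Fq (Fin h → Fqn)) : Set (Fin h → Fqn)) :=
      subset_span ⟨x, hx, rfl⟩
    have hfw : f (gmap Fq Fqn h x) = 0 := by
      have : f (gmap Fq Fqn h x) ∈ Submodule.map f (span Fqn _) := ⟨_, hw, rfl⟩
      rw [hfT] at this
      exact (Submodule.mem_bot Fqn).mp this
    rw [f_gmap] at hfw
    exact hfw
  have h1 : finrank Fq ↥Ssub ≤ finrank Fq ↥(LinearMap.ker (Lmap Fq Fqn a)) :=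
    Submodule.finrank_mono hSker
  have h2 := finrank_ker_Lmap Fq Fqn a ha
  omega

end Frob

end Helpers

set_option synthInstance.maxHeartbeats 1000000

/-- if `k < n` and `U` is an `(h,k)_q`-evasive subspace of `V(r,q^n)`,
then `dim_q U ≤ rn - rnh/(k+1)` (over the rationals). -/
theorem stmt19 {Fq Fqn V : Type*} [Field Fq] [Fintype Fq] [Field Fqn] [Algebra Fq Fqn]
    [AddCommGroup V] [Module Fq V] [Module Fqn V] [IsScalarTower Fq Fqn V]
    [FiniteDimensional Fq Fqn] [FiniteDimensional Fqn V]
    (n r h k : ℕ) (hn : finrank Fq Fqn = n) (hr : finrank Fqn V = r)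
    (hk : k < n) (U : Submodule Fq V) (hU : IsEvasive Fq Fqn h k U) :
    (finrank Fq U : ℚ) ≤ (r : ℚ) * n - (r : ℚ) * n * h / ((k : ℚ) + 1) := by
  classical
  obtain ⟨hspan, hev⟩ := hU
  haveI : FiniteDimensional Fq V := FiniteDimensional.trans Fq Fqn V
  have hnr : finrank Fq V = n * r := by
    rw [← hn, ← hr]; exact (Module.finrank_mul_finrank Fq Fqn V).symm
  have hdle : finrank Fq ↥U ≤ n * r := hnr ▸ U.finrank_le
  have hq1 : (0:ℚ) < (k:ℚ) + 1 := by positivity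
  suffices key : n * r * h ≤ (k+1) * (n * r - finrank Fq ↥U) by
    have h1 : ((n*r*h : ℕ):ℚ) ≤ (((k+1)*(n*r - finrank Fq ↥U) : ℕ):ℚ) := Nat.cast_le.mpr key
    push_cast [Nat.cast_sub hdle] at h1
    have h2 : (r:ℚ)*(n:ℚ)*(h:ℚ)/((k:ℚ)+1) ≤ (r:ℚ)*(n:ℚ) - (finrank Fq ↥U : ℚ) := by
      rw [div_le_iff₀ hq1]; nlinarith [h1]
    linarith
  by_contra hcon
  push_neg at hcon
  have hh1 : 1 ≤ h := by
    rcases Nat.eq_zero_or_pos h with h0 | h1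
    · subst h0; simp at hcon
    · exact h1
  -- first, h ≤ k
  have hbot : finrank Fqn (⊥ : Submodule Fqn V) + h ≤ finrank Fqn (span Fqn (U : Set V)) := by
    rw [finrank_bot]; omega
  obtain ⟨T0, -, hT02, hT03⟩ := chain_lemma U h ⊥ hbot
  have hT0rank : finrank Fqn T0 = h := by rw [hT02, finrank_bot]; omega
  have hhk : h ≤ k := by have := hev T0 hT0rank; omega
  -- the subspace S of Fqn of dimension k+1
  have hk1n : k + 1 ≤ finrank Fq Fqn := by omega
  let bb := finBasis Fq Fqn
  let emb : Fin (k+1) → Fin (finrank Fq Fqn) := fun i => ⟨(i : ℕ), by omega⟩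
  have hembinj : Function.Injective emb := by
    intro i j hij
    have h2 : (emb i).val = (emb j).val := congrArg Fin.val hij
    simp only [emb] at h2
    exact Fin.ext h2
  let Ssub : Submodule Fq Fqn := span Fq (Set.range (bb ∘ emb))
  have hSdim : finrank Fq ↥Ssub = k + 1 := by
    rw [finrank_span_eq_card (bb.linearIndependent.comp emb hembinj)]
    simp
  let Wsub : Submodule Fq (Fin h → Fqn) := Ssub.map (gmap Fq Fqn h)
  have hWdim : finrank Fq ↥Wsub = k + 1 := by
    rw [← hSdim]
    exact (LinearEquiv.finrank_eq
      (Submodule.equivMapOfInjective _ (gmap_injective Fq Fqn hh1) Ssub)).symm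
  have hWspan : span Fqn ((Wsub : Submodule Fq (Fin h → Fqn)) : Set (Fin h → Fqn)) = ⊤ :=
    span_W_top Fq Fqn (by omega) Ssub hSdim
  have hFrank : finrank Fqn (Fin h → Fqn) = h := Module.finrank_fin_fun Fqn
  -- the space of Fqn-linear maps and the evaluation map
  haveI hst : IsScalarTower Fq Fqn ((Fin h → Fqn) →ₗ[Fqn] V) :=
    ⟨fun c a f => LinearMap.ext fun x => smul_assoc c a (f x)⟩
  haveI : FiniteDimensional Fq ((Fin h → Fqn) →ₗ[Fqn] V) :=
    FiniteDimensional.trans Fq Fqn _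
  have hHom : finrank Fq ((Fin h → Fqn) →ₗ[Fqn] V) = n * (h * r) := by
    rw [← Module.finrank_mul_finrank Fq Fqn ((Fin h → Fqn) →ₗ[Fqn] V), hn,
      Module.finrank_linearMap, hFrank, hr]
  have hQuot : finrank Fq (V ⧸ U) = n * r - finrank Fq ↥U := by
    have := Submodule.finrank_quotient_add_finrank U
    omega
  have hCod : finrank Fq (↥Wsub →ₗ[Fq] V ⧸ U) = (k+1) * (n*r - finrank Fq ↥U) := by
    rw [Module.finrank_linearMap, hWdim, hQuot]
  let Ψ : ((Fin h → Fqn) →ₗ[Fqn] V) →ₗ[Fq] (↥Wsub →ₗ[Fq] V ⧸ U) :=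
    { toFun := fun Γ => (U.mkQ).comp ((Γ.restrictScalars Fq).comp Wsub.subtype)
      map_add' := fun Γ₁ Γ₂ => by ext w; simp
      map_smul' := fun c Γ => by ext w; simp }
  have hΨnotinj : ¬ Function.Injective Ψ := by
    intro hinj
    have hle := LinearMap.finrank_le_finrank_of_injective hinj
    rw [hHom, hCod] at hle
    rw [show n * (h * r) = n * r * h by ring] at hle
    omega
  have hker : LinearMap.ker Ψ ≠ ⊥ := fun hb => hΨnotinj (LinearMap.ker_eq_bot.mp hb)
  obtain ⟨Γ, hΓmem, hΓne⟩ := (Submodule.ne_bot_iff _).mp hker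
  have hΓU : ∀ w ∈ Wsub, Γ w ∈ U := by
    intro w hw
    have h0 : Ψ Γ = 0 := LinearMap.mem_ker.mp hΓmem
    have h1 : U.mkQ (Γ w) = 0 := by
      have := LinearMap.congr_fun h0 (⟨w, hw⟩ : ↥Wsub)
      simpa [Ψ] using this
    rwa [Submodule.mkQ_apply, Submodule.Quotient.mk_eq_zero] at h1
  have hrnn : finrank Fqn (LinearMap.range Γ) + finrank Fqn (LinearMap.ker Γ) = h := by
    have := LinearMap.finrank_range_add_finrank_ker Γ
    rw [hFrank] at this; exact this
  have ht1 : 1 ≤ finrank Fqn (LinearMap.range Γ) := by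
    rcases Nat.eq_zero_or_pos (finrank Fqn (LinearMap.range Γ)) with h0 | h1
    · exact absurd (LinearMap.range_eq_bot.mp (Submodule.finrank_eq_zero.mp h0)) hΓne
    · exact h1
  -- (a) : the intersection of W with ker Γ is small
  have hcha : finrank Fqn (LinearMap.ker Γ) +
      (h - 1 - finrank Fqn (LinearMap.ker Γ)) ≤
      finrank Fqn (span Fqn (Wsub : Set (Fin h → Fqn))) := by
    rw [hWspan, finrank_top, hFrank]; omega
  obtain ⟨Ta, hTa1, hTa2, hTa3⟩ :=
    chain_lemma Wsub (h - 1 - finrank Fqn (LinearMap.ker Γ)) (LinearMap.ker Γ) hcha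
  have hTane : Ta ≠ ⊤ := by
    intro htop
    rw [htop, finrank_top, hFrank] at hTa2
    omega
  have hWTa : finrank Fq ↥(Wsub ⊓ Ta.restrictScalars Fq) ≤ h - 1 :=
    W_inf_bound Fq Fqn Ssub Ta hTane
  have hWker : finrank Fq ↥(Wsub ⊓ (LinearMap.ker Γ).restrictScalars Fq) ≤
      finrank Fqn (LinearMap.ker Γ) := by omega
  -- (b) : the intersection of U with range Γ is small
  have hchb : finrank Fqn (LinearMap.range Γ) +
      (h - finrank Fqn (LinearMap.range Γ)) ≤ finrank Fqn (span Fqn (U : Set V)) := by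
    omega
  obtain ⟨Hb, hHb1, hHb2, hHb3⟩ :=
    chain_lemma U (h - finrank Fqn (LinearMap.range Γ)) (LinearMap.range Γ) hchb
  have hHbrank : finrank Fqn Hb = h := by omega
  have hURange : finrank Fq ↥(U ⊓ (LinearMap.range Γ).restrictScalars Fq) +
      (h - finrank Fqn (LinearMap.range Γ)) ≤ k := by
    have := hev Hb hHbrank; omega
  -- (c) : rank-nullity for Γ restricted to W
  have hrn2 : finrank Fq (LinearMap.range ((Γ.restrictScalars Fq).domRestrict Wsub)) +
      finrank Fq (LinearMap.ker ((Γ.restrictScalars Fq).domRestrict Wsub)) = k + 1 := by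
    have := LinearMap.finrank_range_add_finrank_ker ((Γ.restrictScalars Fq).domRestrict Wsub)
    rw [hWdim] at this; exact this
  have hkerf' : finrank Fq ↥(LinearMap.ker ((Γ.restrictScalars Fq).domRestrict Wsub)) ≤
      finrank Fq ↥(Wsub ⊓ (LinearMap.ker Γ).restrictScalars Fq) := by
    have hmem : ∀ x : ↥(LinearMap.ker ((Γ.restrictScalars Fq).domRestrict Wsub)),
        ((x : ↥Wsub) : Fin h → Fqn) ∈ Wsub ⊓ (LinearMap.ker Γ).restrictScalars Fq := by
      intro x
      refine ⟨(x : ↥Wsub).2, ?_⟩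
      have hx : ((Γ.restrictScalars Fq).domRestrict Wsub) (x : ↥Wsub) = 0 :=
        LinearMap.mem_ker.mp x.2
      rw [LinearMap.domRestrict_apply] at hx
      exact (Submodule.restrictScalars_mem Fq _ _).mpr (LinearMap.mem_ker.mpr hx)
    let j : ↥(LinearMap.ker ((Γ.restrictScalars Fq).domRestrict Wsub)) →ₗ[Fq]
        ↥(Wsub ⊓ (LinearMap.ker Γ).restrictScalars Fq) :=
      { toFun := fun x => ⟨((x : ↥Wsub) : Fin h → Fqn), hmem x⟩
        map_add' := fun x y => rfl
        map_smul' := fun c x => rfl }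
    have hjinj : Function.Injective j := by
      intro x y hxy
      have h2 : ((x : ↥Wsub) : Fin h → Fqn) = ((y : ↥Wsub) : Fin h → Fqn) :=
        congrArg (fun z : ↥(Wsub ⊓ (LinearMap.ker Γ).restrictScalars Fq) =>
          (z : Fin h → Fqn)) hxy
      exact Subtype.ext (Subtype.ext h2)
    exact LinearMap.finrank_le_finrank_of_injective hjinj
  have hrangef' : LinearMap.range ((Γ.restrictScalars Fq).domRestrict Wsub) ≤
      U ⊓ (LinearMap.range Γ).restrictScalars Fq := by
    rintro x hx
    obtain ⟨⟨w, hw⟩, rfl⟩ := hx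
    exact ⟨hΓU w hw, ⟨w, rfl⟩⟩
  have hrangef'le : finrank Fq (LinearMap.range ((Γ.restrictScalars Fq).domRestrict Wsub)) ≤
      finrank Fq ↥(U ⊓ (LinearMap.range Γ).restrictScalars Fq) :=
    Submodule.finrank_mono hrangef'
  omega
end
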